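/- arXiv:1811.03698 — 14 statements merged into one kernel-verified Lean document; each statement's English description precedes it below -/
import Mathlib

section
/- Let (H, τ) be a frontal Hilbert algebra and P an irreducible implicative filter of H. Then for all a, b ∈ H, if τ(a) ∈ P and b ∉ P, then b → a ∈ P. -/
namespace FH

variable {H : Type*}

/-- Hilbert algebra axioms for `(imp, one)`. -/
def IsHilbert (imp : H → H → H) (one : H) : Prop :=
  (∀ a b : H, imp a (imp b a) = one) ∧
  (∀ a b c : H, imp (imp a (imp b c)) (imp (imp a b) (imp a c)) = one) ∧
  (∀ a b : H, imp a b = one → imp b a = one → a = b)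

/-- The natural order of a Hilbert algebra. -/
def hle (imp : H → H → H) (one : H) (a b : H) : Prop := imp a b = one

/-- Implicative filter. -/
def IsImpFilter (imp : H → H → H) (one : H) (F : Set H) : Prop :=
  one ∈ F ∧ ∀ a b : H, a ∈ F → imp a b ∈ F → b ∈ F

/-- Irreducible implicative filter. -/
def IsIrr (imp : H → H → H) (one : H) (F : Set H) : Prop :=
  IsImpFilter imp one F ∧ F ≠ Set.univ ∧
    ∀ F1 F2 : Set H, IsImpFilter imp one F1 → IsImpFilter imp one F2 →
      F = F1 ∩ F2 → (F = F1 ∨ F = F2)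

/-- `φ(a) = {P ∈ X(H) : a ∈ P}`. -/
def phi (imp : H → H → H) (one : H) (a : H) : Set (Set H) :=
  {P | IsIrr imp one P ∧ a ∈ P}

/-- `X(H)`, the set of irreducible implicative filters. -/
def XH (imp : H → H → H) (one : H) : Set (Set H) := {P | IsIrr imp one P}

/-- Upsets of the poset `(X(H), ⊆)`. -/
def IsUp (imp : H → H → H) (one : H) (U : Set (Set H)) : Prop :=
  (∀ P ∈ U, IsIrr imp one P) ∧
    ∀ P Q : Set H, P ∈ U → IsIrr imp one Q → P ⊆ Q → Q ∈ U

/-- Heyting implication `U ⇒ V` on upsets of `X(H)` (the complement relative to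
`X(H)` of the downset generated by `U ∩ Vᶜ`). -/
def himp (imp : H → H → H) (one : H) (U V : Set (Set H)) : Set (Set H) :=
  {P | IsIrr imp one P ∧ ∀ Q : Set H, IsIrr imp one Q → P ⊆ Q → Q ∈ U → Q ∈ V}

/-- Frontal operator on a Hilbert algebra. -/
def IsFrontal (imp : H → H → H) (one : H) (t : H → H) : Prop :=
  (∀ a b : H, hle imp one (t (imp a b)) (imp (t a) (t b))) ∧
  (∀ a : H, hle imp one a (t a)) ∧
  (∀ a b : H, hle imp one (t a) (imp (imp (imp b a) b) b))

/-- The elements of `⟨φ[H]⟩`: finite (nonempty) intersections `φ(a₁) ∩ ⋯ ∩ φ(aₙ)`. -/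
def gen (imp : H → H → H) (one : H) (U : Set (Set H)) : Prop :=
  ∃ l : List H, l ≠ [] ∧ U = {P | IsIrr imp one P ∧ ∀ a ∈ l, a ∈ P}

/-- The π-extension `τ^π` of a unary map `t` to the upsets of `X(H)`. -/
def tpi (imp : H → H → H) (one : H) (t : H → H) (U : Set (Set H)) : Set (Set H) :=
  {P | IsIrr imp one P ∧ ∀ Q : Set H, IsIrr imp one Q → t ⁻¹' P ⊆ Q → Q ∈ U}

/-- Maximal elements (w.r.t. inclusion) of a family of sets. -/
def Mx (S : Set (Set H)) : Set (Set H) := {P ∈ S | ∀ Q ∈ S, P ⊆ Q → P = Q}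

/-- Relative complement in `X(H)`. -/
def Xc (imp : H → H → H) (one : H) (U : Set (Set H)) : Set (Set H) :=
  {P | IsIrr imp one P ∧ P ∉ U}

/-- Downset (within `X(H)`) generated by a family `S`. -/
def dn (imp : H → H → H) (one : H) (S : Set (Set H)) : Set (Set H) :=
  {P | IsIrr imp one P ∧ ∃ Q ∈ S, P ⊆ Q}

/-- Implicative semilattice axioms for `(inf, imp, one)`. -/
def IsImpSL (inf : H → H → H) (imp : H → H → H) (one : H) : Prop :=
  (∀ a b : H, inf a b = inf b a) ∧
  (∀ a b c : H, inf (inf a b) c = inf a (inf b c)) ∧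
  (∀ a : H, inf a a = a) ∧
  (∀ a : H, inf a one = a) ∧
  (∀ a b c : H, inf (inf a b) c = inf a b ↔ inf a (imp b c) = a)

/-- The semilattice order: `a ≤ b` iff `a ∧ b = a`. -/
def sle (inf : H → H → H) (a b : H) : Prop := inf a b = a

end FH


section Aux

variable {H : Type*} (imp : H → H → H) (one : H)

namespace AuxFH

variable {F : Set H}

lemma mp (hF : FH.IsImpFilter imp one F) {u v : H} (hu : u ∈ F)
    (huv : imp u v ∈ F) : v ∈ F := hF.2 u v hu huv

lemma axK (hH : FH.IsHilbert imp one) (hF : FH.IsImpFilter imp one F)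
    (u v : H) : imp u (imp v u) ∈ F := by
  rw [hH.1 u v]; exact hF.1

lemma axS (hH : FH.IsHilbert imp one) (hF : FH.IsImpFilter imp one F)
    (u v w : H) : imp (imp u (imp v w)) (imp (imp u v) (imp u w)) ∈ F := by
  rw [hH.2.1 u v w]; exact hF.1

lemma weak (hH : FH.IsHilbert imp one) (hF : FH.IsImpFilter imp one F)
    {u : H} (v : H) (hu : u ∈ F) : imp v u ∈ F :=
  mp imp one hF hu (axK imp one hH hF u v)

lemma imp_self (hH : FH.IsHilbert imp one) (hF : FH.IsImpFilter imp one F)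
    (u : H) : imp u u ∈ F := by
  have h1 := axS imp one hH hF u (imp u u) u
  have h2 := axK imp one hH hF u (imp u u)
  have h3 := axK imp one hH hF u u
  exact mp imp one hF h3 (mp imp one hF h2 h1)

/-- from `u → v ∈ F` infer `(w → u) → (w → v) ∈ F`. -/
lemma ruleB (hH : FH.IsHilbert imp one) (hF : FH.IsImpFilter imp one F)
    {u v : H} (w : H) (h : imp u v ∈ F) : imp (imp w u) (imp w v) ∈ F :=
  mp imp one hF (weak imp one hH hF w h) (axS imp one hH hF w u v)

lemma trans (hH : FH.IsHilbert imp one) (hF : FH.IsImpFilter imp one F)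
    {u v w : H} (h1 : imp u v ∈ F) (h2 : imp v w ∈ F) : imp u w ∈ F :=
  mp imp one hF h1 (ruleB imp one hH hF u h2)

/-- from `p → (q → r) ∈ F` and `q ∈ F` infer `p → r ∈ F`. -/
lemma perm (hH : FH.IsHilbert imp one) (hF : FH.IsImpFilter imp one F)
    {p q r : H} (h : imp p (imp q r) ∈ F) (hq : q ∈ F) : imp p r ∈ F :=
  mp imp one hF (weak imp one hH hF p hq)
    (mp imp one hF h (axS imp one hH hF p q r))

/-- from `u → v ∈ F` infer `(v → w) → (u → w) ∈ F`. -/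
lemma ruleC (hH : FH.IsHilbert imp one) (hF : FH.IsImpFilter imp one F)
    {u v : H} (w : H) (h : imp u v ∈ F) : imp (imp v w) (imp u w) ∈ F := by
  have h1 : imp (imp v w) (imp (imp u v) (imp u w)) ∈ F :=
    trans imp one hH hF (axK imp one hH hF (imp v w) u)
      (axS imp one hH hF u v w)
  exact perm imp one hH hF h1 h

/-- the filter generated by `F ∪ {c}`. -/
lemma genFilter (hH : FH.IsHilbert imp one) (hF : FH.IsImpFilter imp one F)
    (c : H) : FH.IsImpFilter imp one {z | imp c z ∈ F} := by
  constructor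
  · exact weak imp one hH hF c hF.1
  · intro x y hx hxy
    exact mp imp one hF hx (mp imp one hF hxy (axS imp one hH hF c x y))

end AuxFH

end Aux

/-- Let `(H, τ)` be a frontal Hilbert algebra and `P` an irreducible implicative
filter. If `τ(a) ∈ P` and `b ∉ P`, then `b → a ∈ P`. -/
theorem stmt_2 {H : Type*} (imp : H → H → H) (one : H)
    (hH : FH.IsHilbert imp one) (t : H → H) (ht : FH.IsFrontal imp one t)
    (P : Set H) (hP : FH.IsIrr imp one P)
    (a b : H) (ha : t a ∈ P) (hb : b ∉ P) : imp b a ∈ P := by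
  by_contra hba
  have hF : FH.IsImpFilter imp one P := hP.1
  set F1 : Set H := {z | imp b z ∈ P} with hF1def
  set F2 : Set H := {z | imp (imp b a) z ∈ P} with hF2def
  have hF1 : FH.IsImpFilter imp one F1 := AuxFH.genFilter imp one hH hF b
  have hF2 : FH.IsImpFilter imp one F2 := AuxFH.genFilter imp one hH hF (imp b a)
  have hPeq : P = F1 ∩ F2 := by
    apply Set.eq_of_subset_of_subset
    · intro z hz
      exact ⟨AuxFH.weak imp one hH hF b hz, AuxFH.weak imp one hH hF (imp b a) hz⟩
    · rintro z ⟨hz1, hz2⟩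
      -- hz1 : imp b z ∈ P, hz2 : imp (imp b a) z ∈ P
      have h3 : imp (t a) (imp (imp (imp z a) z) z) = one := ht.2.2 a z
      have hi3 : imp (imp (imp z a) z) z ∈ P := by
        apply AuxFH.mp imp one hF ha
        rw [h3]; exact hF.1
      have hza : imp (imp z a) (imp b a) ∈ P := AuxFH.ruleC imp one hH hF a hz1
      have hzz : imp (imp z a) z ∈ P := AuxFH.trans imp one hH hF hza hz2
      exact AuxFH.mp imp one hF hzz hi3
  rcases hP.2.2 F1 F2 hF1 hF2 hPeq with h | h
  · apply hb; rw [h]; exact AuxFH.imp_self imp one hH hF b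
  · apply hba; rw [h]; exact AuxFH.imp_self imp one hH hF (imp b a)
end

section
/- Let H be a Hilbert algebra and φ : H → (X(H))⁺ the map φ(a) = {P ∈ X(H) : a ∈ P}, where X(H) is the poset (under inclusion) of irreducible implicative filters of H. Then for all a, b ∈ H, φ(a → b) = φ(a) ⇒ φ(b), where U ⇒ V = ((U ∩ V^c]]^c is the Heyting implication on the lattice of upsets of X(H). -/
/-- Extension lemma: any implicative filter avoiding `a` extends to an
irreducible implicative filter avoiding `a`. -/
lemma FH.filter_ext {H : Type*} (imp : H → H → H) (one : H)
    {F : Set H} (hF : FH.IsImpFilter imp one F) {a : H} (ha : a ∉ F) :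
    ∃ P : Set H, FH.IsIrr imp one P ∧ F ⊆ P ∧ a ∉ P := by
  set S : Set (Set H) := {G | FH.IsImpFilter imp one G ∧ F ⊆ G ∧ a ∉ G} with hS
  have hchain : ∀ c ⊆ S, IsChain (· ⊆ ·) c → c.Nonempty →
      ∃ ub ∈ S, ∀ s ∈ c, s ⊆ ub := by
    intro c hcS hc ⟨G0, hG0⟩
    refine ⟨⋃₀ c, ⟨⟨?_, ?_⟩, ?_, ?_⟩, fun s hs => Set.subset_sUnion_of_mem hs⟩
    · exact ⟨G0, hG0, (hcS hG0).1.1⟩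
    · rintro x y ⟨G1, hG1, hx⟩ ⟨G2, hG2, hxy⟩
      rcases hc.total hG1 hG2 with h | h
      · exact ⟨G2, hG2, (hcS hG2).1.2 x y (h hx) hxy⟩
      · exact ⟨G1, hG1, (hcS hG1).1.2 x y hx (h hxy)⟩
    · exact (hcS hG0).2.1.trans (Set.subset_sUnion_of_mem hG0)
    · rintro ⟨G, hG, haG⟩; exact (hcS hG).2.2 haG
  obtain ⟨M, hFM, ⟨hMfil, hFsub, haM⟩, hMmax⟩ := zorn_subset_nonempty S hchain F ⟨hF, subset_rfl, ha⟩
  refine ⟨M, ⟨hMfil, ?_, ?_⟩, hFsub, haM⟩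
  · intro h; exact haM (h ▸ Set.mem_univ a)
  · intro F1 F2 h1 h2 hMeq
    by_contra hcon
    push_neg at hcon
    obtain ⟨hne1, hne2⟩ := hcon
    have hM1 : M ⊆ F1 := hMeq ▸ Set.inter_subset_left
    have hM2 : M ⊆ F2 := hMeq ▸ Set.inter_subset_right
    have ha1 : a ∈ F1 := by
      by_contra h
      exact hne1 (hM1.antisymm (hMmax ⟨h1, hFsub.trans hM1, h⟩ hM1))
    have ha2 : a ∈ F2 := by
      by_contra h
      exact hne2 (hM2.antisymm (hMmax ⟨h2, hFsub.trans hM2, h⟩ hM2))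
    exact haM (hMeq ▸ Set.mem_inter ha1 ha2)

/-- For a Hilbert algebra `H` and `a, b ∈ H`, `φ(a → b) = φ(a) ⇒ φ(b)` in the
Heyting algebra of upsets of `X(H)`. -/
theorem stmt_3 {H : Type*} (imp : H → H → H) (one : H)
    (hH : FH.IsHilbert imp one) (a b : H) :
    FH.phi imp one (imp a b) =
      FH.himp imp one (FH.phi imp one a) (FH.phi imp one b) := by
  obtain ⟨hK, hS, _⟩ := hH
  ext P
  constructor
  · rintro ⟨hP, hab⟩
    refine ⟨hP, fun Q hQ hPQ ⟨_, haQ⟩ => ⟨hQ, ?_⟩⟩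
    exact hQ.1.2 a b haQ (hPQ hab)
  · rintro ⟨hP, hup⟩
    refine ⟨hP, ?_⟩
    by_contra hab
    -- the filter generated by P ∪ {a}
    set F : Set H := {c | imp a c ∈ P} with hFdef
    have hone : one ∈ P := hP.1.1
    have mp : ∀ x y : H, x ∈ P → imp x y ∈ P → y ∈ P := hP.1.2
    have mp1 : ∀ x y : H, x ∈ P → imp x y = one → y ∈ P := fun x y hx h =>
      mp x y hx (h ▸ hone)
    have hFfil : FH.IsImpFilter imp one F := by
      refine ⟨?_, ?_⟩
      · exact mp1 one (imp a one) hone (hK one a)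
      · intro c d hc hcd
        have h1 : imp (imp a c) (imp a d) ∈ P :=
          mp1 (imp a (imp c d)) _ hcd (hS a c d)
        exact mp (imp a c) (imp a d) hc h1
    have haF : a ∈ F := by
      have h1 : imp a (imp (imp a a) a) ∈ P := hK a (imp a a) ▸ hone
      have h2 : imp (imp a (imp a a)) (imp a a) ∈ P :=
        mp1 _ _ h1 (hS a (imp a a) a)
      have h3 : imp a (imp a a) ∈ P := hK a a ▸ hone
      exact mp _ _ h3 h2
    have hPF : P ⊆ F := fun c hc => mp1 c (imp a c) hc (hK c a)
    have hbF : b ∉ F := hab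
    obtain ⟨Q, hQirr, hFQ, hbQ⟩ := FH.filter_ext imp one hFfil hbF
    exact hbQ (hup Q hQirr (hPF.trans hFQ) ⟨hQirr, hFQ haF⟩).2
end

section
/- Let H be a Hilbert algebra. The subset ⟨φ[H]⟩ of the Heyting algebra of upsets of X(H), consisting of all finite intersections φ(a₁) ∩ ⋯ ∩ φ(aₙ) with a₁,…,aₙ ∈ H, is closed under the Heyting implication ⇒ of (X(H))⁺. Hence (⟨φ[H]⟩, ∩, ⇒, X(H)) is an implicative semilattice. -/
/-!
Write `(a₁, …, aₙ; x)` (`foldImp` below) for `a₁ → (a₂ → ⋯ → (aₙ → x))`. For an implicative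
filter `P`, the set `{x | (a₁, …, aₙ; x) ∈ P}` is the filter generated by `P ∪ {a₁, …, aₙ}`, so
by the separation theorem for irreducible filters, `(a₁, …, aₙ; b) ∈ P` holds exactly when every
irreducible filter containing `P` and all `aᵢ` contains `b`. This is
`φ(a₁) ∩ ⋯ ∩ φ(aₙ) ⇒ φ(b) = φ(a₁, …, aₙ; b)`, and since `⇒` distributes over intersections in
its second argument, `⟨φ[H]⟩` is closed under `⇒`. Residuation holds for all upsets of `X(H)`.
-/

namespace FH

variable {H : Type*} {imp : H → H → H} {one : H}

namespace IsHilbert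

theorem eq_one_of_one_imp (hH : IsHilbert imp one) {y : H} (h : imp one y = one) : y = one :=
  hH.2.2 y one (by simpa only [h] using hH.1 y one) h

theorem imp_one (hH : IsHilbert imp one) (a : H) : imp a one = one :=
  hH.eq_one_of_one_imp (hH.1 one a)

theorem imp_self (hH : IsHilbert imp one) (a : H) : imp a a = one := by
  have hS := hH.2.1 a (imp a a) a
  rw [hH.1 a (imp a a), hH.1 a a] at hS
  exact hH.eq_one_of_one_imp (hH.eq_one_of_one_imp hS)

theorem hle_imp_imp_of_hle (hH : IsHilbert imp one) {u v : H} (h : hle imp one u v) (a : H) :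
    hle imp one (imp a u) (imp a v) := by
  have hS := hH.2.1 a u v
  rw [show imp u v = one from h, hH.imp_one] at hS
  exact hH.eq_one_of_one_imp hS

theorem hle_trans (hH : IsHilbert imp one) {a b c : H}
    (hab : hle imp one a b) (hbc : hle imp one b c) : hle imp one a c := by
  have h := hH.hle_imp_imp_of_hle hbc a
  rw [hle, show imp a b = one from hab] at h
  exact hH.eq_one_of_one_imp h

end IsHilbert

namespace IsImpFilter

theorem mem_of_hle {P : Set H} (hP : IsImpFilter imp one P) {a b : H} (ha : a ∈ P)
    (hab : hle imp one a b) : b ∈ P :=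
  hP.2 a b ha (by rw [show imp a b = one from hab]; exact hP.1)

theorem sUnion_of_isChain {c : Set (Set H)} (hc : IsChain (· ⊆ ·) c) (hne : c.Nonempty)
    (hF : ∀ F ∈ c, IsImpFilter imp one F) : IsImpFilter imp one (⋃₀ c) := by
  obtain ⟨F₀, hF₀⟩ := hne
  refine ⟨⟨F₀, hF₀, (hF F₀ hF₀).1⟩, ?_⟩
  rintro x y ⟨F₁, hF₁, hx⟩ ⟨F₂, hF₂, hxy⟩
  rcases hc.total hF₁ hF₂ with h | h
  · exact ⟨F₂, hF₂, (hF F₂ hF₂).2 x y (h hx) hxy⟩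
  · exact ⟨F₁, hF₁, (hF F₁ hF₁).2 x y hx (h hxy)⟩

theorem exists_isIrr_of_notMem {F : Set H} (hF : IsImpFilter imp one F) {b : H} (hb : b ∉ F) :
    ∃ Q, IsIrr imp one Q ∧ F ⊆ Q ∧ b ∉ Q := by
  let S : Set (Set H) := {G | IsImpFilter imp one G ∧ b ∉ G}
  have hchain : ∀ c ⊆ S, IsChain (· ⊆ ·) c → c.Nonempty → ∃ ub ∈ S, ∀ G ∈ c, G ⊆ ub := by
    intro c hcS hc hne
    refine ⟨⋃₀ c, ⟨sUnion_of_isChain hc hne fun G hG => (hcS hG).1, ?_⟩,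
      fun G hG => Set.subset_sUnion_of_mem hG⟩
    rintro ⟨G, hG, hbG⟩
    exact (hcS hG).2 hbG
  obtain ⟨m, hFm, hm⟩ := zorn_subset_nonempty S hchain F ⟨hF, hb⟩
  obtain ⟨hmF, hbm⟩ : m ∈ S := hm.prop
  refine ⟨m, ⟨hmF, fun h => hbm (h ▸ Set.mem_univ b), ?_⟩, hFm, hbm⟩
  intro F₁ F₂ hF₁ hF₂ hm₁₂
  -- by maximality, a component that misses `b` equals `m`
  by_contra! hne
  have hb₁ : b ∈ F₁ := by_contra fun h =>
    hne.1 (hm.eq_of_subset ⟨hF₁, h⟩ (hm₁₂ ▸ Set.inter_subset_left))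
  have hb₂ : b ∈ F₂ := by_contra fun h =>
    hne.2 (hm.eq_of_subset ⟨hF₂, h⟩ (hm₁₂ ▸ Set.inter_subset_right))
  exact hbm (hm₁₂ ▸ ⟨hb₁, hb₂⟩)

end IsImpFilter

def foldImp (imp : H → H → H) (l : List H) (x : H) : H := l.foldr imp x

@[simp] theorem foldImp_cons (a : H) (l : List H) (x : H) :
    foldImp imp (a :: l) x = imp a (foldImp imp l x) := rfl

theorem hle_foldImp (hH : IsHilbert imp one) (l : List H) (x : H) :
    hle imp one x (foldImp imp l x) := by
  induction l with
  | nil => exact hH.imp_self x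
  | cons a l ih => exact hH.hle_trans ih (hH.1 _ a)

theorem foldImp_eq_one_of_mem (hH : IsHilbert imp one) {l : List H} {a : H} (ha : a ∈ l) :
    foldImp imp l a = one := by
  induction l with
  | nil => exact absurd ha List.not_mem_nil
  | cons b l ih =>
    rcases List.mem_cons.mp ha with rfl | ha
    · exact hle_foldImp hH l a
    · rw [foldImp_cons, ih ha, hH.imp_one]

theorem hle_foldImp_imp (hH : IsHilbert imp one) (l : List H) (x y : H) :
    hle imp one (foldImp imp l (imp x y)) (imp (foldImp imp l x) (foldImp imp l y)) := by
  induction l with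
  | nil => exact hH.imp_self _
  | cons a l ih => exact hH.hle_trans (hH.hle_imp_imp_of_hle ih a) (hH.2.1 a _ _)

namespace IsImpFilter

theorem foldImp_mem (hH : IsHilbert imp one) {P : Set H} (hP : IsImpFilter imp one P)
    (l : List H) {x : H} (hx : x ∈ P) : foldImp imp l x ∈ P :=
  hP.mem_of_hle hx (hle_foldImp hH l x)

theorem mem_of_foldImp_mem {Q : Set H} (hQ : IsImpFilter imp one Q) {l : List H}
    (hl : ∀ a ∈ l, a ∈ Q) {b : H} (hb : foldImp imp l b ∈ Q) : b ∈ Q := by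
  induction l with
  | nil => exact hb
  | cons a l ih =>
    exact ih (fun c hc => hl c (List.mem_cons_of_mem a hc)) (hQ.2 a _ (hl a List.mem_cons_self) hb)

theorem preimage_foldImp (hH : IsHilbert imp one) {P : Set H} (hP : IsImpFilter imp one P)
    (l : List H) : IsImpFilter imp one {x | foldImp imp l x ∈ P} := by
  refine ⟨hP.foldImp_mem hH l hP.1, fun x y hx hxy => ?_⟩
  have hdist := hP.mem_of_hle hxy (hle_foldImp_imp hH l x y)
  exact hP.2 _ _ hx hdist

theorem foldImp_mem_iff (hH : IsHilbert imp one) {P : Set H} (hP : IsImpFilter imp one P)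
    (l : List H) (b : H) :
    foldImp imp l b ∈ P ↔
      ∀ Q, IsIrr imp one Q → P ⊆ Q → (∀ a ∈ l, a ∈ Q) → b ∈ Q := by
  refine ⟨fun hb Q hQ hPQ hl => hQ.1.mem_of_foldImp_mem hl (hPQ hb), fun h => ?_⟩
  by_contra hb
  obtain ⟨Q, hQ, hsub, hbQ⟩ := (hP.preimage_foldImp hH l).exists_isIrr_of_notMem hb
  refine hbQ (h Q hQ (fun x hx => hsub (hP.foldImp_mem hH l hx)) fun a ha => hsub ?_)
  rw [Set.mem_ofPred_eq, foldImp_eq_one_of_mem hH ha]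
  exact hP.1

end IsImpFilter

/-- `phiList imp one [a₁, …, aₙ] = φ(a₁) ∩ ⋯ ∩ φ(aₙ)`; for `[]` it is `X(H)`. -/
def phiList (imp : H → H → H) (one : H) (l : List H) : Set (Set H) :=
  {P | IsIrr imp one P ∧ ∀ a ∈ l, a ∈ P}

theorem gen_phiList {l : List H} (hl : l ≠ []) : gen imp one (phiList imp one l) := ⟨l, hl, rfl⟩

theorem isUp_phiList (l : List H) : IsUp imp one (phiList imp one l) :=
  ⟨fun _ hP => hP.1, fun _ _ hP hQ hPQ => ⟨hQ, fun a ha => hPQ (hP.2 a ha)⟩⟩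

theorem phiList_append (l m : List H) :
    phiList imp one (l ++ m) = phiList imp one l ∩ phiList imp one m := by
  ext P
  simp only [phiList, List.mem_append, Set.mem_inter_iff, Set.mem_ofPred_eq]
  grind

theorem phiList_singleton_one : phiList imp one [one] = XH imp one := by
  ext P
  simp only [phiList, XH, List.mem_singleton, forall_eq, Set.mem_ofPred_eq]
  exact ⟨And.left, fun hP => ⟨hP, hP.1.1⟩⟩

theorem himp_phiList (hH : IsHilbert imp one) (l m : List H) :
    himp imp one (phiList imp one l) (phiList imp one m) =
      phiList imp one (m.map (foldImp imp l)) := by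
  ext P
  simp only [himp, phiList, List.forall_mem_map, Set.mem_ofPred_eq]
  refine and_congr_right fun hP => ?_
  simp only [hP.1.foldImp_mem_iff hH]
  exact ⟨fun h b hb Q hQ hPQ hl => (h Q hQ hPQ ⟨hQ, hl⟩).2 b hb,
    fun h Q hQ hPQ hl => ⟨hQ, fun b hb => h b hb Q hQ hPQ hl.2⟩⟩

theorem inter_subset_iff_subset_himp {U V W : Set (Set H)} (hU : IsUp imp one U) :
    U ∩ V ⊆ W ↔ U ⊆ himp imp one V W :=
  ⟨fun h P hP => ⟨hU.1 P hP, fun Q hQ hPQ hV => h ⟨hU.2 P Q hP hQ hPQ, hV⟩⟩,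
    fun h P hP => (h hP.1).2 P (hU.1 P hP.1) subset_rfl hP.2⟩

end FH

/-- The set `⟨φ[H]⟩` of finite intersections `φ(a₁) ∩ ⋯ ∩ φ(aₙ)` is closed under
intersections and under the Heyting implication `⇒` of the upsets of `X(H)`,
contains the top `X(H)`, and `(⟨φ[H]⟩, ∩, ⇒, X(H))` is an implicative
semilattice (residuation law). -/
theorem stmt_4 {H : Type*} (imp : H → H → H) (one : H)
    (hH : FH.IsHilbert imp one) :
    (∀ U V, FH.gen imp one U → FH.gen imp one V → FH.gen imp one (U ∩ V)) ∧
    FH.gen imp one (FH.XH imp one) ∧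
    (∀ U V, FH.gen imp one U → FH.gen imp one V →
      FH.gen imp one (FH.himp imp one U V)) ∧
    (∀ U V W, FH.gen imp one U → FH.gen imp one V → FH.gen imp one W →
      (U ∩ V ⊆ W ↔ U ⊆ FH.himp imp one V W)) := by
  open FH in
  refine ⟨?_, ?_, ?_, ?_⟩
  · rintro _ _ ⟨l, hl, rfl⟩ ⟨m, -, rfl⟩
    rw [← phiList, ← phiList, ← phiList_append]
    exact gen_phiList (by simp [hl])
  · rw [← phiList_singleton_one]
    exact gen_phiList (List.cons_ne_nil one [])
  · rintro _ _ ⟨l, -, rfl⟩ ⟨m, hm, rfl⟩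
    rw [← phiList, ← phiList, himp_phiList hH]
    exact gen_phiList (by simpa using hm)
  · rintro _ _ _ ⟨l, -, rfl⟩ - -
    exact inter_subset_iff_subset_himp (isUp_phiList l)
end

section
/- Let A be an implicative semilattice. Then the map φ_A : A → L(U(A)), φ_A(a) = {P ∈ X(A) : a ∈ P}, is an isomorphism of implicative semilattices, where U(A) is the Hilbert algebra reduct of A and L(U(A)) = (⟨φ_A[A]⟩, ∩, ⇒, X(A)). In particular, φ_A(a ∧ b) = φ_A(a) ∩ φ_A(b) for all a, b ∈ A. -/
namespace StmtAux

open FH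

variable {B : Type*} {inf imp : B → B → B} {one : B}

lemma comm (hS : IsImpSL inf imp one) : ∀ a b : B, inf a b = inf b a := hS.1
lemma assoc (hS : IsImpSL inf imp one) : ∀ a b c : B, inf (inf a b) c = inf a (inf b c) := hS.2.1
lemma idem (hS : IsImpSL inf imp one) : ∀ a : B, inf a a = a := hS.2.2.1
lemma inf1 (hS : IsImpSL inf imp one) : ∀ a : B, inf a one = a := hS.2.2.2.1

lemma adj (hS : IsImpSL inf imp one) (a b c : B) :
    sle inf (inf a b) c ↔ sle inf a (imp b c) := hS.2.2.2.2 a b c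

lemma le_refl (hS : IsImpSL inf imp one) (a : B) : sle inf a a := idem hS a

lemma le_trans (hS : IsImpSL inf imp one) {a b c : B}
    (h1 : sle inf a b) (h2 : sle inf b c) : sle inf a c := by
  unfold sle at *
  calc inf a c = inf (inf a b) c := by rw [h1]
    _ = inf a (inf b c) := assoc hS a b c
    _ = inf a b := by rw [h2]
    _ = a := h1

lemma le_antisymm (hS : IsImpSL inf imp one) {a b : B}
    (h1 : sle inf a b) (h2 : sle inf b a) : a = b := by
  unfold sle at *
  rw [← h1, comm hS, h2]

lemma inf_le_left (hS : IsImpSL inf imp one) (a b : B) : sle inf (inf a b) a := by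
  unfold sle
  calc inf (inf a b) a = inf a (inf b a) := assoc hS a b a
    _ = inf a (inf a b) := by rw [comm hS b a]
    _ = inf (inf a a) b := (assoc hS a a b).symm
    _ = inf a b := by rw [idem hS]

lemma inf_le_right (hS : IsImpSL inf imp one) (a b : B) : sle inf (inf a b) b := by
  unfold sle
  calc inf (inf a b) b = inf a (inf b b) := assoc hS a b b
    _ = inf a b := by rw [idem hS]

lemma le_inf (hS : IsImpSL inf imp one) {a b c : B}
    (h1 : sle inf a b) (h2 : sle inf a c) : sle inf a (inf b c) := by
  unfold sle at *
  calc inf a (inf b c) = inf (inf a b) c := (assoc hS a b c).symm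
    _ = inf a c := by rw [h1]
    _ = a := h2

lemma le_one (hS : IsImpSL inf imp one) (a : B) : sle inf a one := inf1 hS a

lemma one_inf (hS : IsImpSL inf imp one) (a : B) : inf one a = a := by
  rw [comm hS]; exact inf1 hS a

lemma hle_iff (hS : IsImpSL inf imp one) (a b : B) :
    imp a b = one ↔ sle inf a b := by
  have h1 : sle inf one (imp a b) ↔ imp a b = one := by
    unfold sle; rw [one_inf hS]
  have h2 : sle inf (inf one a) b ↔ sle inf a b := by
    rw [one_inf hS]
  rw [← h1, ← adj hS, h2]

lemma le_mp (hS : IsImpSL inf imp one) {s x y : B}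
    (h1 : sle inf s x) (h2 : sle inf s (imp x y)) : sle inf s y :=
  le_trans hS (le_inf hS h2 h1) ((adj hS (imp x y) x y).2 (le_refl hS _))

lemma filt_up (hS : IsImpSL inf imp one) {F : Set B} (hF : IsImpFilter imp one F)
    {a b : B} (ha : a ∈ F) (hab : sle inf a b) : b ∈ F := by
  refine hF.2 a b ha ?_
  rw [(hle_iff hS a b).2 hab]; exact hF.1

lemma filt_inf (hS : IsImpSL inf imp one) {F : Set B} (hF : IsImpFilter imp one F)
    {a b : B} (ha : a ∈ F) (hb : b ∈ F) : inf a b ∈ F := by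
  have h1 : imp a (imp b (inf a b)) = one := by
    rw [hle_iff hS]
    exact (adj hS a b (inf a b)).1 (le_refl hS _)
  have h2 : imp b (inf a b) ∈ F := hF.2 a _ ha (by rw [h1]; exact hF.1)
  exact hF.2 b _ hb h2

lemma filt_mem_iff (hS : IsImpSL inf imp one) {F : Set B} (hF : IsImpFilter imp one F)
    (a b : B) : inf a b ∈ F ↔ a ∈ F ∧ b ∈ F := by
  constructor
  · intro h
    exact ⟨filt_up hS hF h (inf_le_left hS a b), filt_up hS hF h (inf_le_right hS a b)⟩
  · rintro ⟨h1, h2⟩; exact filt_inf hS hF h1 h2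

/-- Separation: extend a filter avoiding `b` to an irreducible filter avoiding `b`. -/
lemma sep (hS : IsImpSL inf imp one) {F : Set B} {b : B}
    (hF : IsImpFilter imp one F) (hb : b ∉ F) :
    ∃ Q, IsIrr imp one Q ∧ F ⊆ Q ∧ b ∉ Q := by
  have hchainU : ∀ c ⊆ {G | IsImpFilter imp one G ∧ b ∉ G}, IsChain (· ⊆ ·) c →
      c.Nonempty → ∃ ub ∈ {G | IsImpFilter imp one G ∧ b ∉ G}, ∀ s ∈ c, s ⊆ ub := by
    intro c hc hchain hcne
    refine ⟨⋃₀ c, ⟨⟨?_, ?_⟩, ?_⟩, fun s hs => Set.subset_sUnion_of_mem hs⟩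
    · obtain ⟨G, hG⟩ := hcne
      exact ⟨G, hG, (hc hG).1.1⟩
    · rintro x y ⟨G1, hG1, hx⟩ ⟨G2, hG2, hy⟩
      rcases hchain.total hG1 hG2 with h | h
      · exact ⟨G2, hG2, (hc hG2).1.2 x y (h hx) hy⟩
      · exact ⟨G1, hG1, (hc hG1).1.2 x y hx (h hy)⟩
    · rintro ⟨G, hG, hbG⟩
      exact (hc hG).2 hbG
  obtain ⟨Q, hFQ, hQS, hQmax⟩ :=
    zorn_subset_nonempty {G | IsImpFilter imp one G ∧ b ∉ G} hchainU F ⟨hF, hb⟩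
  refine ⟨Q, ⟨hQS.1, ?_, ?_⟩, hFQ, hQS.2⟩
  · intro h; exact hQS.2 (h ▸ Set.mem_univ b)
  · intro F1 F2 hF1 hF2 heq
    by_contra hne
    push_neg at hne
    have hb1 : b ∈ F1 := by
      by_contra hb1
      exact hne.1 (Set.Subset.antisymm (heq ▸ Set.inter_subset_left)
        (hQmax ⟨hF1, hb1⟩ (heq ▸ Set.inter_subset_left)))
    have hb2 : b ∈ F2 := by
      by_contra hb2
      exact hne.2 (Set.Subset.antisymm (heq ▸ Set.inter_subset_right)
        (hQmax ⟨hF2, hb2⟩ (heq ▸ Set.inter_subset_right)))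
    exact hQS.2 (heq ▸ Set.mem_inter hb1 hb2)

lemma gen_filter (hS : IsImpSL inf imp one) {F : Set B} (hF : IsImpFilter imp one F)
    (a : B) : IsImpFilter imp one {x | ∃ p ∈ F, sle inf (inf p a) x} := by
  constructor
  · exact ⟨one, hF.1, le_one hS _⟩
  · rintro x y ⟨p, hp, hpx⟩ ⟨q, hq, hqy⟩
    refine ⟨inf p q, filt_inf hS hF hp hq, ?_⟩
    have h1 : sle inf (inf (inf p q) a) (inf p a) :=
      le_inf hS (le_trans hS (inf_le_left hS _ _) (inf_le_left hS p q)) (inf_le_right hS _ _)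
    have h2 : sle inf (inf (inf p q) a) (inf q a) :=
      le_inf hS (le_trans hS (inf_le_left hS _ _) (inf_le_right hS p q)) (inf_le_right hS _ _)
    exact le_mp hS (le_trans hS h1 hpx) (le_trans hS h2 hqy)

lemma foldr_mem (hS : IsImpSL inf imp one) {F : Set B} (hF : IsImpFilter imp one F)
    (l : List B) : l.foldr inf one ∈ F ↔ ∀ a ∈ l, a ∈ F := by
  induction l with
  | nil => simpa using hF.1
  | cons a t ih =>
      simp only [List.foldr_cons, List.mem_cons, filt_mem_iff hS hF, ih]
      constructor
      · rintro ⟨h1, h2⟩ x hx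
        rcases hx with rfl | hx
        · exact h1
        · exact h2 x hx
      · intro h
        exact ⟨h a (Or.inl rfl), fun x hx => h x (Or.inr hx)⟩

end StmtAux

/-- For an implicative semilattice `A`, the map `φ_A : A → L(U(A))` is an
isomorphism of implicative semilattices: it preserves `∧` (as intersection),
`→` (as `⇒`), the top element, is injective, and its image is all of `L(U(A))`.
In particular `φ_A(a ∧ b) = φ_A(a) ∩ φ_A(b)`. -/
theorem stmt_7 {B : Type*} (inf : B → B → B) (imp : B → B → B) (one : B)
    (hS : FH.IsImpSL inf imp one) :
    (∀ a b : B, FH.phi imp one (inf a b) = FH.phi imp one a ∩ FH.phi imp one b) ∧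
    (∀ a b : B, FH.phi imp one (imp a b) =
      FH.himp imp one (FH.phi imp one a) (FH.phi imp one b)) ∧
    FH.phi imp one one = FH.XH imp one ∧
    Function.Injective (FH.phi imp one) ∧
    (∀ U, FH.gen imp one U → ∃ a : B, FH.phi imp one a = U) := by
  obtain ⟨hS1, hS2, hS3, hS4, hS5⟩ := id hS
  refine ⟨?_, ?_, ?_, ?_, ?_⟩
  · -- meet
    intro a b
    ext P
    simp only [FH.phi, Set.mem_setOf_eq, Set.mem_inter_iff]
    constructor
    · rintro ⟨hP, h⟩
      rw [StmtAux.filt_mem_iff hS hP.1] at h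
      exact ⟨⟨hP, h.1⟩, ⟨hP, h.2⟩⟩
    · rintro ⟨⟨hP, h1⟩, ⟨-, h2⟩⟩
      exact ⟨hP, StmtAux.filt_inf hS hP.1 h1 h2⟩
  · -- implication
    intro a b
    ext P
    simp only [FH.phi, FH.himp, Set.mem_setOf_eq]
    constructor
    · rintro ⟨hP, h⟩
      refine ⟨hP, fun Q hQ hPQ hQa => ⟨hQ, hQ.1.2 a b hQa.2 (hPQ h)⟩⟩
    · rintro ⟨hP, h⟩
      refine ⟨hP, ?_⟩
      by_contra hab
      have hbF : b ∉ {x | ∃ p ∈ P, FH.sle inf (inf p a) x} := by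
        rintro ⟨p, hp, hpb⟩
        exact hab (StmtAux.filt_up hS hP.1 hp ((StmtAux.adj hS p a b).1 hpb))
      obtain ⟨Q, hQ, hFQ, hbQ⟩ := StmtAux.sep hS (StmtAux.gen_filter hS hP.1 a) hbF
      have hPQ : P ⊆ Q := fun p hp => hFQ ⟨p, hp, StmtAux.inf_le_left hS p a⟩
      have haQ : a ∈ Q := hFQ ⟨one, hP.1.1, by
        rw [StmtAux.one_inf hS]; exact StmtAux.le_refl hS a⟩
      exact hbQ (h Q hQ hPQ ⟨hQ, haQ⟩).2
  · -- top
    ext P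
    simp only [FH.phi, FH.XH, Set.mem_setOf_eq]
    exact ⟨fun h => h.1, fun h => ⟨h, h.1.1⟩⟩
  · -- injective
    intro a b h
    have key : ∀ x y : B, FH.phi imp one x = FH.phi imp one y → FH.sle inf x y := by
      intro x y hxy
      by_contra hxy'
      have hyF : y ∉ {z | FH.sle inf x z} := hxy'
      have hF : FH.IsImpFilter imp one {z | FH.sle inf x z} :=
        ⟨StmtAux.le_one hS x, fun u v hu huv => StmtAux.le_mp hS hu huv⟩
      obtain ⟨Q, hQ, hFQ, hyQ⟩ := StmtAux.sep hS hF hyF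
      have hxQ : Q ∈ FH.phi imp one x := ⟨hQ, hFQ (StmtAux.le_refl hS x)⟩
      rw [hxy] at hxQ
      exact hyQ hxQ.2
    exact StmtAux.le_antisymm hS (key a b h) (key b a h.symm)
  · -- surjective onto gen
    rintro U ⟨l, -, rfl⟩
    refine ⟨l.foldr inf one, ?_⟩
    ext P
    simp only [FH.phi, Set.mem_setOf_eq]
    constructor
    · rintro ⟨hP, h⟩
      exact ⟨hP, (StmtAux.foldr_mem hS hP.1 l).1 h⟩
    · rintro ⟨hP, h⟩
      exact ⟨hP, (StmtAux.foldr_mem hS hP.1 l).2 h⟩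
end

section
/- Let (H, τ) be a frontal Hilbert algebra. Define τ^π on upsets of X(H) by: P ∈ τ^π(U) iff every Q ∈ X(H) with τ⁻¹[P] ⊆ Q satisfies Q ∈ U. Then for every a ∈ H, φ(τ(a)) = τ^π(φ(a)). -/
namespace FH

theorem filter_up {H : Type*} {imp : H → H → H} {one : H} {F : Set H}
    (hF : IsImpFilter imp one F) {x y : H} (hx : x ∈ F) (h : imp x y = one) :
    y ∈ F := hF.2 x y hx (h ▸ hF.1)

theorem preimage_filter {H : Type*} {imp : H → H → H} {one : H} {t : H → H}
    (ht : IsFrontal imp one t) {P : Set H} (hP : IsImpFilter imp one P) :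
    IsImpFilter imp one (t ⁻¹' P) := by
  constructor
  · exact filter_up hP hP.1 (ht.2.1 one)
  · intro x y hx hxy
    have h1 : imp (t x) (t y) ∈ P := filter_up hP hxy (ht.1 x y)
    exact hP.2 _ _ hx h1

theorem exists_irr {H : Type*} {imp : H → H → H} {one : H} {F : Set H}
    (hF : IsImpFilter imp one F) {a : H} (ha : a ∉ F) :
    ∃ Q, IsIrr imp one Q ∧ F ⊆ Q ∧ a ∉ Q := by
  set S : Set (Set H) := {G | IsImpFilter imp one G ∧ F ⊆ G ∧ a ∉ G} with hS
  obtain ⟨m, hFm, hmS, hmax⟩ := zorn_subset_nonempty S (fun c hcS hc hne => by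
      refine ⟨⋃₀ c, ⟨⟨?_, ?_⟩, ?_, ?_⟩, fun s hs => Set.subset_sUnion_of_mem hs⟩
      · obtain ⟨G, hG⟩ := hne
        exact ⟨G, hG, (hcS hG).1.1⟩
      · rintro x y ⟨G1, hG1, hx⟩ ⟨G2, hG2, hxy⟩
        rcases hc.total hG1 hG2 with h | h
        · exact ⟨G2, hG2, (hcS hG2).1.2 x y (h hx) hxy⟩
        · exact ⟨G1, hG1, (hcS hG1).1.2 x y hx (h hxy)⟩
      · obtain ⟨G, hG⟩ := hne
        exact (hcS hG).2.1.trans (Set.subset_sUnion_of_mem hG)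
      · rintro ⟨G, hG, haG⟩
        exact (hcS hG).2.2 haG) F ⟨hF, subset_rfl, ha⟩
  refine ⟨m, ⟨hmS.1, ?_, ?_⟩, hFm, hmS.2.2⟩
  · intro h
    exact hmS.2.2 (h ▸ Set.mem_univ a)
  · intro F1 F2 hF1 hF2 heq
    by_contra hne
    push_neg at hne
    have h1 : a ∈ F1 := by
      by_contra haF1
      have : F1 ⊆ m := hmax ⟨hF1, hFm.trans (heq ▸ Set.inter_subset_left), haF1⟩
        (heq ▸ Set.inter_subset_left)
      exact hne.1 (subset_antisymm (heq ▸ Set.inter_subset_left) this)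
    have h2 : a ∈ F2 := by
      by_contra haF2
      have : F2 ⊆ m := hmax ⟨hF2, hFm.trans (heq ▸ Set.inter_subset_right), haF2⟩
        (heq ▸ Set.inter_subset_right)
      exact hne.2 (subset_antisymm (heq ▸ Set.inter_subset_right) this)
    exact hmS.2.2 (heq ▸ Set.mem_inter h1 h2)

end FH

/-- For a frontal Hilbert algebra `(H, τ)` and `a ∈ H`,
`φ(τ(a)) = τ^π(φ(a))`, where
`P ∈ τ^π(U)` iff every irreducible `Q ⊇ τ⁻¹[P]` belongs to `U`. -/
theorem stmt_8 {H : Type*} (imp : H → H → H) (one : H)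
    (hH : FH.IsHilbert imp one) (t : H → H) (ht : FH.IsFrontal imp one t)
    (a : H) :
    FH.phi imp one (t a) = FH.tpi imp one t (FH.phi imp one a) := by
  ext P
  constructor
  · rintro ⟨hP, hta⟩
    refine ⟨hP, fun Q hQ hsub => ⟨hQ, hsub hta⟩⟩
  · rintro ⟨hP, hall⟩
    refine ⟨hP, ?_⟩
    by_contra hta
    have hpre := FH.preimage_filter ht hP.1
    obtain ⟨Q, hQ, hsub, haQ⟩ := FH.exists_irr hpre (a := a) hta
    exact haQ (hall Q hQ hsub).2
end

section
/- Let (H, τ) be a frontal Hilbert algebra. Then τ^π is a frontal operator on the Heyting algebra (X(H))⁺ of upsets of X(H): (1) U ⊆ τ^π(U); (2) τ^π(U ∩ V) = τ^π(U) ∩ τ^π(V); (3) τ^π(U) ⊆ V ∪ (V ⇒ U), for all upsets U, V. -/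
section Aux

variable {H : Type*} {imp : H → H → H} {one : H}

open FH

lemma aux_memK (hH : IsHilbert imp one) {P : Set H} (hP : IsImpFilter imp one P)
    (a : H) {b : H} (hb : b ∈ P) : imp a b ∈ P :=
  hP.2 b (imp a b) hb (by rw [hH.1 b a]; exact hP.1)

lemma aux_memS (hH : IsHilbert imp one) {P : Set H} (hP : IsImpFilter imp one P)
    {a b c : H} (h1 : imp a (imp b c) ∈ P) (h2 : imp a b ∈ P) : imp a c ∈ P := by
  have hs : imp (imp a (imp b c)) (imp (imp a b) (imp a c)) ∈ P := by
    rw [hH.2.1 a b c]; exact hP.1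
  exact hP.2 _ _ h2 (hP.2 _ _ h1 hs)

lemma aux_imp_self (hH : IsHilbert imp one) {P : Set H} (hP : IsImpFilter imp one P)
    (a : H) : imp a a ∈ P := by
  have k1 : imp a (imp a a) ∈ P := by rw [hH.1 a a]; exact hP.1
  have k2 : imp a (imp (imp a a) a) ∈ P := by rw [hH.1 a (imp a a)]; exact hP.1
  exact aux_memS hH hP k2 k1

lemma aux_trans (hH : IsHilbert imp one) {P : Set H} (hP : IsImpFilter imp one P)
    {a b c : H} (h1 : imp a b ∈ P) (h2 : imp b c ∈ P) : imp a c ∈ P :=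
  aux_memS hH hP (aux_memK hH hP a h2) h1

lemma aux_gen (hH : IsHilbert imp one) {P : Set H} (hP : IsImpFilter imp one P)
    (a : H) : IsImpFilter imp one {x | imp a x ∈ P} :=
  ⟨aux_memK hH hP a hP.1, fun _ _ hx hxy => aux_memS hH hP hxy hx⟩

lemma aux_crit (hH : IsHilbert imp one) {P : Set H} (hP : IsIrr imp one P)
    {a b : H} (ha : a ∉ P) (hb : b ∉ P) :
    ∃ c, c ∉ P ∧ imp a c ∈ P ∧ imp b c ∈ P := by
  by_contra h
  push_neg at h
  have hF1 := aux_gen hH hP.1 a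
  have hF2 := aux_gen hH hP.1 b
  have hEq : P = {x | imp a x ∈ P} ∩ {x | imp b x ∈ P} := by
    ext x
    constructor
    · intro hx; exact ⟨aux_memK hH hP.1 a hx, aux_memK hH hP.1 b hx⟩
    · rintro ⟨h1, h2⟩
      by_contra hx
      exact (h x hx h1) h2
  rcases hP.2.2 _ _ hF1 hF2 hEq with h1 | h2
  · exact ha (by rw [h1]; exact aux_imp_self hH hP.1 a)
  · exact hb (by rw [h2]; exact aux_imp_self hH hP.1 b)

lemma aux_key (hH : IsHilbert imp one) {t : H → H} (ht : IsFrontal imp one t)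
    {P : Set H} (hP : IsIrr imp one P) {a b : H}
    (hta : t a ∈ P) (hb : b ∉ P) : imp b a ∈ P := by
  by_contra hba
  obtain ⟨c, hc, hbc, hbac⟩ := aux_crit hH hP hb hba
  have h3 : imp (imp (imp c a) c) c ∈ P := by
    have hle3 : imp (t a) (imp (imp (imp c a) c) c) = one := ht.2.2 a c
    exact hP.1.2 _ _ hta (by rw [hle3]; exact hP.1.1)
  have hF := aux_gen hH hP.1 (imp c a)
  have hca_ba : imp (imp c a) (imp b a) ∈ P := by
    have h1 : imp b c ∈ {x | imp (imp c a) x ∈ P} := aux_memK hH hP.1 _ hbc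
    have h2 : imp c a ∈ {x | imp (imp c a) x ∈ P} := aux_imp_self hH hP.1 (imp c a)
    exact aux_trans hH hF h1 h2
  have hcac : imp (imp c a) c ∈ P := aux_trans hH hP.1 hca_ba hbac
  exact hc (hP.1.2 _ _ hcac h3)

end Aux

/-- For a frontal Hilbert algebra `(H, τ)`, the map `τ^π` is a frontal operator
on the Heyting algebra of upsets of `X(H)`:
(1) `U ⊆ τ^π(U)`; (2) `τ^π(U ∩ V) = τ^π(U) ∩ τ^π(V)`;
(3) `τ^π(U) ⊆ V ∪ (V ⇒ U)`. -/
theorem stmt_9 {H : Type*} (imp : H → H → H) (one : H)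
    (hH : FH.IsHilbert imp one) (t : H → H) (ht : FH.IsFrontal imp one t) :
    (∀ U, FH.IsUp imp one U → U ⊆ FH.tpi imp one t U) ∧
    (∀ U V, FH.IsUp imp one U → FH.IsUp imp one V →
      FH.tpi imp one t (U ∩ V) = FH.tpi imp one t U ∩ FH.tpi imp one t V) ∧
    (∀ U V, FH.IsUp imp one U → FH.IsUp imp one V →
      FH.tpi imp one t U ⊆ V ∪ FH.himp imp one V U) := by
  refine ⟨?_, ?_, ?_⟩
  · intro U hU P hP
    have hPirr := hU.1 P hP
    refine ⟨hPirr, fun Q hQ hsub => ?_⟩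
    refine hU.2 P Q hP hQ (fun a ha => hsub ?_)
    show t a ∈ P
    refine hPirr.1.2 a (t a) ha ?_
    have h : imp a (t a) = one := ht.2.1 a
    rw [h]; exact hPirr.1.1
  · intro U V _ _
    ext P
    constructor
    · rintro ⟨h1, h2⟩
      exact ⟨⟨h1, fun Q hQ hs => (h2 Q hQ hs).1⟩, ⟨h1, fun Q hQ hs => (h2 Q hQ hs).2⟩⟩
    · rintro ⟨⟨h1, h2⟩, ⟨_, h3⟩⟩
      exact ⟨h1, fun Q hQ hs => ⟨h2 Q hQ hs, h3 Q hQ hs⟩⟩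
  · intro U V _ hV P hP
    obtain ⟨hPirr, hPall⟩ := hP
    by_cases hPV : P ∈ V
    · exact Or.inl hPV
    · refine Or.inr ⟨hPirr, fun Q hQ hPQ hQV => ?_⟩
      apply hPall Q hQ
      intro a hta
      by_contra haQ
      have hab : ∃ b, b ∈ Q ∧ b ∉ P := by
        by_contra hno
        push_neg at hno
        have hPQ' : P = Q := Set.Subset.antisymm hPQ hno
        exact hPV (hPQ' ▸ hQV)
      obtain ⟨b, hbQ, hbP⟩ := hab
      have hba : imp b a ∈ P := aux_key hH ht hPirr hta hbP
      exact haQ (hQ.1.2 b a hbQ (hPQ hba))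
end

section
/- Let H be a bounded implicative semilattice and a ∈ H. Then the set γ_a = {b ∈ H : ¬b ≤ b and a ≤ b} is a filter of H (it contains 1, is an upset, and is closed under meets). Consequently, if H is finite, γ_a has a minimum for every a, i.e., H has a γ-operator. -/
/-- In a bounded implicative semilattice, for every `a` the set
`γ_a = {b : ¬b ≤ b ∧ a ≤ b}` is a filter (contains `1`, is an upset, closed
under meets); consequently, if the algebra is finite, `γ_a` has a minimum for
every `a`, i.e. there is a `γ`-operator. -/
theorem stmt_11 {B : Type*} (inf : B → B → B) (imp : B → B → B) (zero one : B)
    (hS : FH.IsImpSL inf imp one) (hbot : ∀ a : B, FH.sle inf zero a) (a : B) :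
    (one ∈ {b : B | FH.sle inf (imp b zero) b ∧ FH.sle inf a b}) ∧
    (∀ b c : B, b ∈ {b : B | FH.sle inf (imp b zero) b ∧ FH.sle inf a b} →
      FH.sle inf b c → c ∈ {b : B | FH.sle inf (imp b zero) b ∧ FH.sle inf a b}) ∧
    (∀ b c : B, b ∈ {b : B | FH.sle inf (imp b zero) b ∧ FH.sle inf a b} →
      c ∈ {b : B | FH.sle inf (imp b zero) b ∧ FH.sle inf a b} →
      inf b c ∈ {b : B | FH.sle inf (imp b zero) b ∧ FH.sle inf a b}) ∧
    (Finite B → ∃ m ∈ {b : B | FH.sle inf (imp b zero) b ∧ FH.sle inf a b},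
      ∀ b ∈ {b : B | FH.sle inf (imp b zero) b ∧ FH.sle inf a b}, FH.sle inf m b) := by

  classical
  obtain ⟨comm, assoc, idem, oner, resid⟩ := hS
  have htrans : ∀ {x y z : B}, FH.sle inf x y → FH.sle inf y z → FH.sle inf x z := by
    intro x y z h1 h2
    show inf x z = x
    conv_lhs => rw [← h1, assoc, h2]
    exact h1
  have infle1 : ∀ x y : B, FH.sle inf (inf x y) x := by
    intro x y
    show inf (inf x y) x = inf x y
    rw [assoc, comm y x, ← assoc, idem]
  have infle2 : ∀ x y : B, FH.sle inf (inf x y) y := by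
    intro x y
    show inf (inf x y) y = inf x y
    rw [assoc, idem]
  have leinf : ∀ {x y z : B}, FH.sle inf x y → FH.sle inf x z → FH.sle inf x (inf y z) := by
    intro x y z h1 h2
    show inf x (inf y z) = x
    rw [← assoc, h1, h2]
  have hmp : ∀ x y : B, FH.sle inf (inf (imp x y) x) y := by
    intro x y
    exact (resid (imp x y) x y).mpr (idem _)
  set S := {b : B | FH.sle inf (imp b zero) b ∧ FH.sle inf a b} with hSdef
  have h1 : one ∈ S := by
    constructor
    · show inf (imp one zero) one = imp one zero
      rw [oner]
    · exact oner a
  have hup : ∀ b c : B, b ∈ S → FH.sle inf b c → c ∈ S := by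
    intro b c hb hbc
    obtain ⟨hnb, hab⟩ := hb
    refine ⟨?_, htrans hab hbc⟩
    -- ¬c ≤ ¬b ≤ b ≤ c
    have hncnb : FH.sle inf (imp c zero) (imp b zero) := by
      apply (resid _ _ _).mp
      -- inf (imp c zero) b ≤ zero
      have h2 : FH.sle inf (inf (imp c zero) b) c := htrans (infle2 _ _) hbc
      have h3 : FH.sle inf (inf (imp c zero) b) (inf (imp c zero) c) :=
        leinf (infle1 _ _) h2
      exact htrans h3 (hmp c zero)
    exact htrans (htrans hncnb hnb) hbc
  have hcl : ∀ b c : B, b ∈ S → c ∈ S → inf b c ∈ S := by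
    intro b c hb hc
    obtain ⟨hnb, hab⟩ := hb
    obtain ⟨hnc, hac⟩ := hc
    refine ⟨?_, leinf hab hac⟩
    set x := imp (inf b c) zero with hx
    have hx0 : FH.sle inf (inf x (inf b c)) zero := hmp (inf b c) zero
    have hxbnc : FH.sle inf (inf x b) (imp c zero) := by
      apply (resid _ _ _).mp
      show FH.sle inf (inf (inf x b) c) zero
      rw [assoc]
      exact hx0
    have hxbc : FH.sle inf (inf x b) c := htrans hxbnc hnc
    have hxb0 : FH.sle inf (inf x b) zero := by
      have h := hx0
      rw [← assoc] at h
      rw [hxbc] at h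
      exact h
    have hxnb : FH.sle inf x (imp b zero) := (resid _ _ _).mp hxb0
    have hxb : FH.sle inf x b := htrans hxnb hnb
    have hxc : FH.sle inf x c := by
      have : inf x b = x := hxb
      rw [FH.sle, ← this]
      exact hxbc
    exact leinf hxb hxc
  refine ⟨h1, hup, hcl, ?_⟩
  intro hfin
  have : Fintype B := Fintype.ofFinite B
  have key : ∀ s : Finset B, (∀ x ∈ s, x ∈ S) → s.Nonempty →
      ∃ m ∈ S, ∀ b ∈ s, FH.sle inf m b := by
    intro s
    refine Finset.induction_on s ?_ ?_
    · intro _ h; exact absurd h (by simp)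
    · intro x t hxt ih hsub _
      by_cases ht : t.Nonempty
      · obtain ⟨m, hmS, hm⟩ := ih (fun y hy => hsub y (Finset.mem_insert_of_mem hy)) ht
        refine ⟨inf x m, hcl x m (hsub x (Finset.mem_insert_self x t)) hmS, ?_⟩
        intro b hb
        rcases Finset.mem_insert.mp hb with rfl | hb
        · exact infle1 _ _
        · exact htrans (infle2 x m) (hm b hb)
      · refine ⟨x, hsub x (Finset.mem_insert_self x t), ?_⟩
        intro b hb
        rcases Finset.mem_insert.mp hb with rfl | hb
        · exact idem b
        · exact absurd ⟨b, hb⟩ ht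
  obtain ⟨m, hmS, hm⟩ := key (Set.toFinset S) (fun x hx => Set.mem_toFinset.mp hx)
    ⟨one, Set.mem_toFinset.mpr h1⟩
  exact ⟨m, hmS, fun b hb => hm b (Set.mem_toFinset.mpr hb)⟩
end

section
/- Let (H, γ) be a bounded Hilbert algebra with γ-operator. Then γ^π(∅) = (X(H))_M, the set of maximal irreducible implicative filters of H, and moreover γ^π(U) = U ∪ (X(H))_M for every upset U of X(H). In particular, (X(H)⁺, γ^π) is a bounded implicative semilattice (indeed Heyting algebra) with γ-operator: ¬γ^π(∅) = ∅ and γ^π(U) ⊆ U ∪ γ^π(∅). -/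
namespace FHaux
open FH

variable {H : Type*} {imp : H → H → H} {one zero : H} {g : H → H}

/-! ### Basic Hilbert algebra facts -/

lemma hK (hH : IsHilbert imp one) (a b : H) : imp a (imp b a) = one := hH.1 a b
lemma hS (hH : IsHilbert imp one) (a b c : H) :
    imp (imp a (imp b c)) (imp (imp a b) (imp a c)) = one := hH.2.1 a b c
lemma anti (hH : IsHilbert imp one) {a b : H} (h1 : imp a b = one) (h2 : imp b a = one) :
    a = b := hH.2.2 a b h1 h2

lemma imp_one (hH : IsHilbert imp one) (a : H) : imp a one = one := by
  have h1 : imp one (imp a one) = one := hK hH one a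
  have h2 : imp (imp a one) (imp one (imp a one)) = one := hK hH (imp a one) one
  rw [h1] at h2
  exact anti hH h2 h1

lemma mp1 (hH : IsHilbert imp one) {b : H} (h : imp one b = one) : b = one :=
  anti hH (imp_one hH b) h

lemma ii (hH : IsHilbert imp one) (a : H) : imp a a = one := by
  have s := hS hH a (imp one a) a
  rw [hK hH a (imp one a)] at s
  have s2 := mp1 hH s
  rw [hK hH a one] at s2
  exact mp1 hH s2

lemma one_imp (hH : IsHilbert imp one) (a : H) : imp one a = a := by
  have s := hS hH (imp one a) one a
  rw [ii hH (imp one a)] at s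
  have s2 := mp1 hH s
  rw [imp_one hH (imp one a)] at s2
  have s3 := mp1 hH s2
  exact anti hH s3 (hK hH a one)

/-! ### Filters -/

lemma filt_mp {F : Set H} (hF : IsImpFilter imp one F) {a b : H}
    (ha : a ∈ F) (hab : imp a b ∈ F) : b ∈ F := hF.2 a b ha hab

lemma filt_of_eq_one {F : Set H} (hF : IsImpFilter imp one F) {a b : H}
    (ha : a ∈ F) (h : imp a b = one) : b ∈ F := hF.2 a b ha (h ▸ hF.1)

/-- Deduction-theorem extension: `{c | x → c ∈ P}`. -/
def ext (imp : H → H → H) (P : Set H) (x : H) : Set H := {c | imp x c ∈ P}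

lemma mem_ext {P : Set H} {x c : H} : c ∈ ext imp P x ↔ imp x c ∈ P := Iff.rfl

lemma ext_filter (hH : IsHilbert imp one) {P : Set H} (hP : IsImpFilter imp one P) (x : H) :
    IsImpFilter imp one (ext imp P x) := by
  constructor
  · show imp x one ∈ P
    rw [imp_one hH]; exact hP.1
  · intro a b ha hb
    have h2 : imp (imp x a) (imp x b) ∈ P := filt_of_eq_one hP hb (hS hH x a b)
    exact filt_mp hP ha h2

lemma subset_ext (hH : IsHilbert imp one) {P : Set H} (hP : IsImpFilter imp one P) (x : H) :
    P ⊆ ext imp P x := fun a ha => filt_of_eq_one hP ha (hK hH a x)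

lemma mem_ext_self (hH : IsHilbert imp one) {P : Set H} (hP : IsImpFilter imp one P) (x : H) :
    x ∈ ext imp P x := by
  show imp x x ∈ P
  rw [ii hH]; exact hP.1

lemma trans_mem (hH : IsHilbert imp one) {P : Set H} (hP : IsImpFilter imp one P) {a b c : H}
    (h1 : imp a b ∈ P) (h2 : imp b c ∈ P) : imp a c ∈ P := by
  have h2' : imp a (imp b c) ∈ P := filt_of_eq_one hP h2 (hK hH (imp b c) a)
  have h3 : imp (imp a b) (imp a c) ∈ P := filt_of_eq_one hP h2' (hS hH a b c)
  exact filt_mp hP h1 h3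

lemma proper_iff (hbot : ∀ a : H, imp zero a = one) {F : Set H}
    (hF : IsImpFilter imp one F) : F ≠ Set.univ ↔ zero ∉ F := by
  constructor
  · intro h hz
    exact h (Set.eq_univ_of_forall fun a => filt_of_eq_one hF hz (hbot a))
  · intro h he
    exact h (he ▸ Set.mem_univ zero)

/-! ### Irreducible filters: separation -/

lemma irr_sep (hH : IsHilbert imp one) {P : Set H} {a b : H} (hP : IsIrr imp one P)
    (ha : a ∉ P) (hb : b ∉ P) :
    ∃ c, c ∉ P ∧ imp a c ∈ P ∧ imp b c ∈ P := by
  have hPf := hP.1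
  have h1 := ext_filter hH hPf a
  have h2 := ext_filter hH hPf b
  have hne : P ≠ ext imp P a ∩ ext imp P b := by
    intro h
    rcases hP.2.2 _ _ h1 h2 h with h' | h'
    · exact ha (by rw [h']; exact mem_ext_self hH hPf a)
    · exact hb (by rw [h']; exact mem_ext_self hH hPf b)
  have hsub : P ⊆ ext imp P a ∩ ext imp P b :=
    fun x hx => ⟨subset_ext hH hPf a hx, subset_ext hH hPf b hx⟩
  have hex : ∃ c ∈ ext imp P a ∩ ext imp P b, c ∉ P := by
    by_contra hc
    push_neg at hc
    exact hne (Set.Subset.antisymm hsub hc)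
  rcases hex with ⟨c, ⟨hc1, hc2⟩, hc3⟩
  exact ⟨c, hc3, hc1, hc2⟩

/-! ### Zorn-style extension lemmas -/

lemma chain_union_filter {C : Set (Set H)} (hC : ∀ F ∈ C, IsImpFilter imp one F)
    (hch : IsChain (· ⊆ ·) C) (hne : C.Nonempty) : IsImpFilter imp one (⋃₀ C) := by
  constructor
  · rcases hne with ⟨F, hF⟩
    exact ⟨F, hF, (hC F hF).1⟩
  · rintro a b ⟨F1, hF1, ha⟩ ⟨F2, hF2, hab⟩
    rcases hch.total hF1 hF2 with h | h
    · exact ⟨F2, hF2, (hC F2 hF2).2 a b (h ha) hab⟩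
    · exact ⟨F1, hF1, (hC F1 hF1).2 a b ha (h hab)⟩

lemma exists_irr_ext (hH : IsHilbert imp one) {F : Set H} {a : H}
    (hF : IsImpFilter imp one F) (ha : a ∉ F) :
    ∃ P, IsIrr imp one P ∧ F ⊆ P ∧ a ∉ P := by
  obtain ⟨M, hFM, hM⟩ := zorn_subset_nonempty
    {G | IsImpFilter imp one G ∧ F ⊆ G ∧ a ∉ G}
    (fun c hcS hchain hcne =>
      ⟨⋃₀ c, ⟨chain_union_filter (fun G hG => (hcS hG).1) hchain hcne,
        ((hcS hcne.choose_spec).2.1).trans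
          (Set.subset_sUnion_of_mem hcne.choose_spec),
        fun hmem => by
          rcases hmem with ⟨G, hG, haG⟩
          exact (hcS hG).2.2 haG⟩,
        fun s hs => Set.subset_sUnion_of_mem hs⟩)
    F ⟨hF, subset_refl F, ha⟩
  obtain ⟨⟨hMf, hFM', haM⟩, hMmax⟩ := hM
  refine ⟨M, ⟨hMf, ?_, ?_⟩, hFM', haM⟩
  · intro h
    exact haM (by rw [h]; trivial)
  · intro F1 F2 h1 h2 heq
    by_contra hcon
    push_neg at hcon
    have hsub1 : M ⊆ F1 := by rw [heq]; exact Set.inter_subset_left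
    have hsub2 : M ⊆ F2 := by rw [heq]; exact Set.inter_subset_right
    have ha1 : a ∈ F1 := by
      by_contra h
      exact hcon.1 (Set.Subset.antisymm hsub1 (hMmax ⟨h1, hFM'.trans hsub1, h⟩ hsub1))
    have ha2 : a ∈ F2 := by
      by_contra h
      exact hcon.2 (Set.Subset.antisymm hsub2 (hMmax ⟨h2, hFM'.trans hsub2, h⟩ hsub2))
    exact haM (by rw [heq]; exact ⟨ha1, ha2⟩)

/-- Maximal proper implicative filters. -/
def IsMaxP (imp : H → H → H) (one zero : H) (P : Set H) : Prop :=
  IsImpFilter imp one P ∧ zero ∉ P ∧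
    ∀ F : Set H, IsImpFilter imp one F → zero ∉ F → P ⊆ F → F = P

lemma exists_max_ext {F : Set H} (hF : IsImpFilter imp one F) (hz : zero ∉ F) :
    ∃ M, IsMaxP imp one zero M ∧ F ⊆ M := by
  obtain ⟨M, hFM, hM⟩ := zorn_subset_nonempty
    {G | IsImpFilter imp one G ∧ F ⊆ G ∧ zero ∉ G}
    (fun c hcS hchain hcne =>
      ⟨⋃₀ c, ⟨chain_union_filter (fun G hG => (hcS hG).1) hchain hcne,
        ((hcS hcne.choose_spec).2.1).trans
          (Set.subset_sUnion_of_mem hcne.choose_spec),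
        fun hmem => by
          rcases hmem with ⟨G, hG, hzG⟩
          exact (hcS hG).2.2 hzG⟩,
        fun s hs => Set.subset_sUnion_of_mem hs⟩)
    F ⟨hF, subset_refl F, hz⟩
  obtain ⟨⟨hMf, hFM', hzM⟩, hMmax⟩ := hM
  exact ⟨M, ⟨hMf, hzM, fun G hG hzG hMG =>
    Set.Subset.antisymm (hMmax ⟨hG, hFM'.trans hMG, hzG⟩ hMG) hMG⟩, hFM'⟩

lemma maxp_irr (hbot : ∀ a : H, imp zero a = one) {P : Set H}
    (h : IsMaxP imp one zero P) : IsIrr imp one P := by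
  refine ⟨h.1, (proper_iff hbot h.1).2 h.2.1, ?_⟩
  intro F1 F2 h1 h2 heq
  have hs1 : P ⊆ F1 := by rw [heq]; exact Set.inter_subset_left
  by_cases hz1 : zero ∈ F1
  · right
    have hF1 : F1 = Set.univ := Set.eq_univ_of_forall fun x => filt_of_eq_one h1 hz1 (hbot x)
    rw [heq, hF1, Set.univ_inter]
  · left
    exact (h.2.2 F1 h1 hz1 hs1).symm

lemma maxp_mem_Mx (hbot : ∀ a : H, imp zero a = one) {P : Set H}
    (h : IsMaxP imp one zero P) : P ∈ Mx (XH imp one) :=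
  ⟨maxp_irr hbot h, fun Q hQ hPQ =>
    (h.2.2 Q hQ.1 ((proper_iff hbot hQ.1).1 hQ.2.1) hPQ).symm⟩

lemma Mx_maxp (hbot : ∀ a : H, imp zero a = one) {P : Set H}
    (h : P ∈ Mx (XH imp one)) : IsMaxP imp one zero P := by
  obtain ⟨hPirr, hmax⟩ := h
  have hPf : IsImpFilter imp one P := hPirr.1
  refine ⟨hPf, (proper_iff hbot hPf).1 hPirr.2.1, fun F hF hzF hPF => ?_⟩
  obtain ⟨M, hM, hFM⟩ := exists_max_ext hF hzF
  have hPM : P = M := hmax M (maxp_irr hbot hM) (hPF.trans hFM)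
  have hFP : F ⊆ P := by rw [hPM]; exact hFM
  exact Set.Subset.antisymm hFP hPF

/-! ### γ-operator lemmas -/

lemma maxp_g_mem (hH : IsHilbert imp one) (hg4 : ∀ a : H, hle imp one (imp (g a) zero) (g a))
    {P : Set H} (hM : IsMaxP imp one zero P) (a : H) : g a ∈ P := by
  by_contra hga
  have hE := ext_filter hH hM.1 (g a)
  by_cases hz : zero ∈ ext imp P (g a)
  · exact hga (filt_of_eq_one hM.1 hz (hg4 a))
  · have heq := hM.2.2 _ hE hz (subset_ext hH hM.1 (g a))
    exact hga (heq ▸ mem_ext_self hH hM.1 (g a))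

lemma key (hH : IsHilbert imp one) (hbot : ∀ a : H, imp zero a = one)
    (hg5 : ∀ a b : H, hle imp one (g a)
      (imp (imp a b) (imp (imp (imp b zero) b) b)))
    {P : Set H} {a : H} (hP : IsIrr imp one P) (hga : g a ∈ P) (ha : a ∉ P) :
    IsMaxP imp one zero P := by
  have hPf := hP.1
  refine ⟨hPf, (proper_iff hbot hPf).1 hP.2.1, fun F hF hzF hPF => ?_⟩
  refine Set.Subset.antisymm (fun x hxF => ?_) hPF
  by_contra hxP
  obtain ⟨c, hc, hac, hxc⟩ := irr_sep hH hP ha hxP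
  have hcF : c ∈ F := filt_mp hF hxF (hPF hxc)
  have hnc : imp c zero ∈ P := by
    by_contra hnc
    obtain ⟨d, hd, hcd, hncd⟩ := irr_sep hH hP hc hnc
    have had : imp a d ∈ P := trans_mem hH hPf hac hcd
    have hdc : imp (imp d zero) (imp c zero) ∈ P := by
      have hP1 := ext_filter hH hPf (imp d zero)
      have hP2 := ext_filter hH hP1 c
      have h1 : d ∈ ext imp (ext imp P (imp d zero)) c :=
        subset_ext hH hPf (imp d zero) hcd
      have h2 : imp d zero ∈ ext imp (ext imp P (imp d zero)) c :=
        subset_ext hH hP1 c (mem_ext_self hH hPf (imp d zero))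
      exact filt_mp hP2 h1 h2
    have hndd : imp (imp d zero) d ∈ P := trans_mem hH hPf hdc hncd
    have t1 : imp (imp a d) (imp (imp (imp d zero) d) d) ∈ P :=
      filt_of_eq_one hPf hga (hg5 a d)
    have t2 := filt_mp hPf had t1
    have t3 := filt_mp hPf hndd t2
    exact hd t3
  exact hzF (filt_mp hF hcF (hPF hnc))

/-! ### The main tpi computation -/

lemma tpi_eq (hH : IsHilbert imp one) (hbot : ∀ a : H, imp zero a = one)
    (hf : IsFrontal imp one g)
    (hg4 : ∀ a : H, hle imp one (imp (g a) zero) (g a))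
    (hg5 : ∀ a b : H, hle imp one (g a)
      (imp (imp a b) (imp (imp (imp b zero) b) b)))
    {U : Set (Set H)} (hU : IsUp imp one U) :
    tpi imp one g U = U ∪ Mx (XH imp one) := by
  ext P
  constructor
  · rintro ⟨hPirr, hcond⟩
    by_cases hPM : P ∈ Mx (XH imp one)
    · exact Or.inr hPM
    · left
      apply hcond P hPirr
      intro b hb
      by_contra hbP
      exact hPM (maxp_mem_Mx hbot (key hH hbot hg5 hPirr hb hbP))
  · rintro (hPU | hPM)
    · have hPirr := hU.1 P hPU
      refine ⟨hPirr, fun Q hQ hsub => ?_⟩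
      exact hU.2 P Q hPU hQ
        (fun b hbP => hsub (show g b ∈ P from filt_of_eq_one hPirr.1 hbP (hf.2.1 b)))
    · have hM := Mx_maxp hbot hPM
      refine ⟨hPM.1, fun Q hQ hsub => ?_⟩
      exfalso
      have hzQ : zero ∈ Q := hsub (show g zero ∈ P from maxp_g_mem hH hg4 hM zero)
      exact (proper_iff hbot hQ.1).1 hQ.2.1 hzQ

lemma himp_Mx_empty (hH : IsHilbert imp one) (hbot : ∀ a : H, imp zero a = one) :
    himp imp one (Mx (XH imp one)) (∅ : Set (Set H)) = ∅ := by
  ext P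
  simp only [Set.mem_empty_iff_false, iff_false]
  rintro ⟨hPirr, hcond⟩
  obtain ⟨M, hM, hPM⟩ := exists_max_ext (zero := zero) hPirr.1 ((proper_iff hbot hPirr.1).1 hPirr.2.1)
  exact hcond M (maxp_irr hbot hM) hPM (maxp_mem_Mx hbot hM)

end FHaux


/-- For a bounded Hilbert algebra `(H, γ)` with a `γ`-operator:
`γ^π(∅) = (X(H))_M` (the maximal irreducible implicative filters),
`γ^π(U) = U ∪ (X(H))_M` for every upset `U` of `X(H)`,
`¬γ^π(∅) = ∅`, and `γ^π(U) ⊆ U ∪ γ^π(∅)`; i.e. `γ^π` is a `γ`-operator on the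
Heyting algebra of upsets of `X(H)`. -/
theorem stmt_12 {H : Type*} (imp : H → H → H) (one zero : H)
    (hH : FH.IsHilbert imp one) (hbot : ∀ a : H, imp zero a = one)
    (g : H → H) (hf : FH.IsFrontal imp one g)
    (hg4 : ∀ a : H, FH.hle imp one (imp (g a) zero) (g a))
    (hg5 : ∀ a b : H, FH.hle imp one (g a)
      (imp (imp a b) (imp (imp (imp b zero) b) b))) :
    FH.tpi imp one g ∅ = FH.Mx (FH.XH imp one) ∧
    (∀ U, FH.IsUp imp one U →
      FH.tpi imp one g U = U ∪ FH.Mx (FH.XH imp one)) ∧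
    FH.himp imp one (FH.tpi imp one g ∅) ∅ = ∅ ∧
    (∀ U, FH.IsUp imp one U →
      FH.tpi imp one g U ⊆ U ∪ FH.tpi imp one g ∅) := by
  have hup0 : FH.IsUp imp one (∅ : Set (Set H)) :=
    ⟨fun P h => absurd h (Set.notMem_empty P), fun P Q h => absurd h (Set.notMem_empty P)⟩
  have h2 : ∀ U, FH.IsUp imp one U →
      FH.tpi imp one g U = U ∪ FH.Mx (FH.XH imp one) :=
    fun U hU => FHaux.tpi_eq hH hbot hf hg4 hg5 hU
  have h1 : FH.tpi imp one g ∅ = FH.Mx (FH.XH imp one) := by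
    rw [h2 ∅ hup0, Set.empty_union]
  refine ⟨h1, h2, ?_, ?_⟩
  · rw [h1]
    exact FHaux.himp_Mx_empty hH hbot
  · intro U hU
    rw [h2 U hU, h1]
end

section
/- Let (P, ≤) be a poset and P⁺ its Heyting algebra of upsets. Then P⁺ has a successor operation if and only if (P, ≤) satisfies the ascending chain condition. Moreover, when it exists, the successor is S(U) = U ∪ (U^c)_M. -/
/-- Maximal elements of a subset of a poset. -/
def maxSet {P : Type*} [PartialOrder P] (A : Set P) : Set P :=
  {x ∈ A | ∀ y ∈ A, x ≤ y → x = y}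

/-- Heyting implication on the upsets of a poset:
`U ⇒ V` is the complement of the downset generated by `U ∩ Vᶜ`. -/
def pimp {P : Type*} [PartialOrder P] (U V : Set P) : Set P :=
  {x | ∀ y, x ≤ y → y ∈ U → y ∈ V}

/-- The ascending chain condition: every nonempty subset has a maximal element. -/
def ACC (P : Type*) [PartialOrder P] : Prop :=
  ∀ A : Set P, A.Nonempty → ∃ m ∈ A, ∀ y ∈ A, m ≤ y → m = y

/-- A successor operation on the Heyting algebra of upsets of a poset:
a frontal operator `S` with `S(U) ⇒ U = U`. -/
def IsSucc {P : Type*} [PartialOrder P] (S : Set P → Set P) : Prop :=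
  (∀ U, IsUpperSet U → IsUpperSet (S U)) ∧
  (∀ U V, IsUpperSet U → IsUpperSet V → S (U ∩ V) = S U ∩ S V) ∧
  (∀ U, IsUpperSet U → U ⊆ S U) ∧
  (∀ U V, IsUpperSet U → IsUpperSet V → S U ⊆ V ∪ pimp V U) ∧
  (∀ U, IsUpperSet U → pimp (S U) U = U)

section Aux
variable {P : Type*} [PartialOrder P]

/-- Any successor is contained in `U ∪ (Uᶜ)_M`; uses the frontal axiom
`S U ⊆ V ∪ (V ⇒ U)` with `V = {y | ¬ y ≤ x}`. -/
lemma succ_subset' {S : Set P → Set P} (hS : IsSucc S) {U : Set P}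
    (hU : IsUpperSet U) : S U ⊆ U ∪ maxSet Uᶜ := by
  intro x hx
  by_cases hxU : x ∈ U
  · exact Or.inl hxU
  · refine Or.inr ⟨hxU, fun z hz hxz => ?_⟩
    by_contra hne
    have hV : IsUpperSet {y : P | ¬ y ≤ x} := fun a b hab ha hb => ha (hab.trans hb)
    rcases hS.2.2.2.1 U _ hU hV hx with h | h
    · exact h le_rfl
    · exact hz (h z hxz (fun hzx => hne (le_antisymm hxz hzx)))

/-- `U ∪ (Uᶜ)_M` is contained in any successor; uses `pimp (S U) U = U`. -/
lemma subset_succ' {S : Set P → Set P} (hS : IsSucc S) {U : Set P}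
    (hU : IsUpperSet U) : U ∪ maxSet Uᶜ ⊆ S U := by
  rintro x (hx | ⟨hxc, hmax⟩)
  · exact hS.2.2.1 U hU hx
  · have hx' : x ∉ pimp (S U) U := by rw [hS.2.2.2.2 U hU]; exact hxc
    simp only [pimp, Set.mem_setOf_eq] at hx'
    push_neg at hx'
    obtain ⟨y, hxy, hyS, hyU⟩ := hx'
    rcases succ_subset' hS hU hyS with h | ⟨hyc, _⟩
    · exact absurd h hyU
    · have hxyeq : x = y := hmax y hyc hxy
      rw [hxyeq]; exact hyS

/-- Uniqueness: any successor operation equals `U ↦ U ∪ (Uᶜ)_M` on upsets. -/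
lemma succ_eq' {S : Set P → Set P} (hS : IsSucc S) {U : Set P}
    (hU : IsUpperSet U) : S U = U ∪ maxSet Uᶜ :=
  Set.Subset.antisymm (succ_subset' hS hU) (subset_succ' hS hU)

/-- Existence of a successor operation implies the ascending chain condition. -/
lemma exists_succ_acc' : (∃ S : Set P → Set P, IsSucc S) → ACC P := by
  rintro ⟨S, hS⟩ A ⟨a, ha⟩
  set U : Set P := {x | ∀ b ∈ A, ¬ x ≤ b} with hUdef
  have hU : IsUpperSet U := fun p q hpq hp b hb hqb => hp b hb (hpq.trans hqb)
  have haU : a ∉ pimp (S U) U := by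
    rw [hS.2.2.2.2 U hU]; exact fun h => h a ha le_rfl
  simp only [pimp, Set.mem_setOf_eq] at haU
  push_neg at haU
  obtain ⟨y, hay, hyS, hyU⟩ := haU
  rcases succ_subset' hS hU hyS with h | ⟨hyc, hmax⟩
  · exact absurd h hyU
  · have hex : ∃ b ∈ A, y ≤ b := by
      by_contra h
      exact hyc (fun b hb hyb => h ⟨b, hb, hyb⟩)
    obtain ⟨b, hb, hyb⟩ := hex
    have hbc : b ∈ Uᶜ := fun h => h b hb le_rfl
    have hybeq : y = b := hmax b hbc hyb
    subst hybeq
    refine ⟨y, hb, fun z hz hyz => ?_⟩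
    exact hmax z (fun h => h z hz le_rfl) hyz

/-- Under the ACC, `U ↦ U ∪ (Uᶜ)_M` is a successor operation. -/
lemma acc_succ' (hacc : ACC P) :
    IsSucc (fun U : Set P => U ∪ maxSet Uᶜ) := by
  have hmax_upper : ∀ U : Set P, IsUpperSet U → IsUpperSet (U ∪ maxSet Uᶜ) := by
    intro U hU a b hab h
    rcases h with h | ⟨hac, hamax⟩
    · exact Or.inl (hU hab h)
    · by_cases hbU : b ∈ U
      · exact Or.inl hbU
      · have : a = b := hamax b hbU hab
        subst this; exact Or.inr ⟨hac, hamax⟩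
  refine ⟨hmax_upper, ?_, fun U _ => Set.subset_union_left, ?_, ?_⟩
  · -- meet preservation
    intro U V hU hV
    ext x
    constructor
    · rintro (⟨hxU, hxV⟩ | ⟨hxc, hmax⟩)
      · exact ⟨Or.inl hxU, Or.inl hxV⟩
      · constructor
        · by_cases hxU : x ∈ U
          · exact Or.inl hxU
          · exact Or.inr ⟨hxU, fun z hz hxz => hmax z (fun h => hz h.1) hxz⟩
        · by_cases hxV : x ∈ V
          · exact Or.inl hxV
          · exact Or.inr ⟨hxV, fun z hz hxz => hmax z (fun h => hz h.2) hxz⟩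
    · rintro ⟨h1, h2⟩
      rcases h1 with hxU | ⟨hxUc, hmaxU⟩
      · rcases h2 with hxV | ⟨hxVc, hmaxV⟩
        · exact Or.inl ⟨hxU, hxV⟩
        · refine Or.inr ⟨fun h => hxVc h.2, fun z hz hxz => ?_⟩
          have hzU : z ∈ U := hU hxz hxU
          exact hmaxV z (fun h => hz ⟨hzU, h⟩) hxz
      · rcases h2 with hxV | ⟨hxVc, hmaxV⟩
        · refine Or.inr ⟨fun h => hxUc h.1, fun z hz hxz => ?_⟩
          have hzV : z ∈ V := hV hxz hxV
          exact hmaxU z (fun h => hz ⟨h, hzV⟩) hxz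
        · refine Or.inr ⟨fun h => hxUc h.1, fun z hz hxz => ?_⟩
          by_cases hzU : z ∈ U
          · exact hmaxV z (fun h => hz ⟨hzU, h⟩) hxz
          · exact hmaxU z hzU hxz
  · -- frontal axiom `S U ⊆ V ∪ (V ⇒ U)`
    intro U V hU hV x hx
    by_cases hxV : x ∈ V
    · exact Or.inl hxV
    · refine Or.inr (fun y hxy hyV => ?_)
      rcases hx with hxU | ⟨hxUc, hmax⟩
      · exact hU hxy hxU
      · by_contra hyU
        have : x = y := hmax y hyU hxy
        exact hxV (this ▸ hyV)
  · -- successor axiom `pimp (S U) U = U`: this is where the ACC is used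
    intro U hU
    ext x
    constructor
    · intro hx
      by_contra hxU
      obtain ⟨m, ⟨hmc, hxm⟩, hmmax⟩ :=
        hacc {y | y ∉ U ∧ x ≤ y} ⟨x, hxU, le_rfl⟩
      have hmM : m ∈ maxSet Uᶜ :=
        ⟨hmc, fun z hz hmz => hmmax z ⟨hz, hxm.trans hmz⟩ hmz⟩
      exact hmc (hx m hxm (Or.inr hmM))
    · intro hx y hxy _
      exact hU hxy hx

end Aux

/-- For a poset `P`, the Heyting algebra of upsets `P⁺` has a successor
operation iff `P` satisfies the ascending chain condition; moreover any
successor operation is given by `S(U) = U ∪ (Uᶜ)_M` on upsets. -/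
theorem stmt_13 {P : Type*} [PartialOrder P] :
    ((∃ S : Set P → Set P, IsSucc S) ↔ ACC P) ∧
    (∀ S : Set P → Set P, IsSucc S →
      ∀ U : Set P, IsUpperSet U → S U = U ∪ maxSet Uᶜ) := by
  refine ⟨⟨exists_succ_acc', fun h => ⟨_, acc_succ' h⟩⟩,
    fun S hS U hU => succ_eq' hS hU⟩
end

section
/- Let (P, ≤) be a poset satisfying the ascending chain condition. Then the operator S on the Heyting algebra P⁺ of upsets defined by S(U) = U ∪ (U^c)_M is a successor operation: it is a frontal operator and satisfies S(U) ⇒ U = U. -/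
/-- Under ACC, every element outside `U` lies below a maximal element of `Uᶜ`. -/
lemma exists_max_above {P : Type*} [PartialOrder P] (hacc : ACC P) (U : Set P)
    {x : P} (hx : x ∉ U) : ∃ m ∈ maxSet Uᶜ, x ≤ m := by
  obtain ⟨m, ⟨hmU, hxm⟩, hmax⟩ := hacc {y | y ∉ U ∧ x ≤ y} ⟨x, hx, le_refl x⟩
  exact ⟨m, ⟨hmU, fun y hy hmy => hmax y ⟨hy, hxm.trans hmy⟩ hmy⟩, hxm⟩

/-- If a poset `P` satisfies the ascending chain condition, then
`S(U) = U ∪ (Uᶜ)_M` is a successor operation on the Heyting algebra of upsets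
of `P`: it is a frontal operator and satisfies `S(U) ⇒ U = U`. -/
theorem stmt_14 {P : Type*} [PartialOrder P] (hacc : ACC P) :
    IsSucc (fun U : Set P => U ∪ maxSet Uᶜ) := by
  refine ⟨?_, ?_, ?_, ?_, ?_⟩
  · -- upper set
    intro U hU x y hxy hx
    rcases hx with hx | ⟨hxc, hxm⟩
    · exact Or.inl (hU hxy hx)
    · by_cases hy : y ∈ U
      · exact Or.inl hy
      · have := hxm y hy hxy
        exact Or.inr ⟨hy, fun z hz hyz => (this ▸ hxm) z hz hyz⟩
  · -- multiplicative
    intro U V hU hV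
    ext x
    simp only [Set.mem_union, Set.mem_inter_iff]
    constructor
    · rintro (⟨hxU, hxV⟩ | ⟨hxc, hxm⟩)
      · exact ⟨Or.inl hxU, Or.inl hxV⟩
      · constructor
        · by_cases hxU : x ∈ U
          · exact Or.inl hxU
          · exact Or.inr ⟨hxU, fun y hy hxy => hxm y (fun h => hy h.1) hxy⟩
        · by_cases hxV : x ∈ V
          · exact Or.inl hxV
          · exact Or.inr ⟨hxV, fun y hy hxy => hxm y (fun h => hy h.2) hxy⟩
    · rintro ⟨hSU, hSV⟩
      rcases hSU with hxU | ⟨hxU, hmU⟩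
      · rcases hSV with hxV | ⟨hxV, hmV⟩
        · exact Or.inl ⟨hxU, hxV⟩
        · refine Or.inr ⟨fun h => hxV h.2, fun y hy hxy => ?_⟩
          have hyU : y ∈ U := hU hxy hxU
          exact hmV y (fun h => hy ⟨hyU, h⟩) hxy
      · rcases hSV with hxV | ⟨hxV, hmV⟩
        · refine Or.inr ⟨fun h => hxU h.1, fun y hy hxy => ?_⟩
          have hyV : y ∈ V := hV hxy hxV
          exact hmU y (fun h => hy ⟨h, hyV⟩) hxy
        · refine Or.inr ⟨fun h => hxU h.1, fun y hy hxy => ?_⟩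
          by_cases hyU : y ∈ U
          · exact hmV y (fun h => hy ⟨hyU, h⟩) hxy
          · exact hmU y hyU hxy
  · -- expansive
    intro U _ x hx
    exact Or.inl hx
  · -- frontal
    intro U V hU hV x hx
    rcases hx with hx | ⟨hxc, hxm⟩
    · exact Or.inr (fun y hxy _ => hU hxy hx)
    · by_cases hxV : x ∈ V
      · exact Or.inl hxV
      · refine Or.inr (fun y hxy hyV => ?_)
        by_contra hyU
        exact hxV ((hxm y hyU hxy) ▸ hyV)
  · -- successor equation
    intro U hU
    ext x
    constructor
    · intro hx
      by_contra hxU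
      obtain ⟨m, hm, hxm⟩ := exists_max_above hacc U hxU
      exact hm.1 (hx m hxm (Or.inr hm))
    · intro hx y hxy _
      exact hU hxy hx
end

section
/- Let H be an implicative semilattice and a ∈ H. Then S_a = {b ∈ H : b → a ≤ b} is a filter of H: 1 ∈ S_a, S_a is an upset, and b, c ∈ S_a implies b ∧ c ∈ S_a. Consequently, every finite implicative semilattice has a successor operation. -/
/-- In an implicative semilattice, for every `a` the set
`S_a = {b : b → a ≤ b}` is a filter (contains `1`, is an upset, closed under
meets); consequently every finite implicative semilattice has a successor
operation (a minimum of `S_a` for every `a`). -/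
theorem stmt_15 {B : Type*} (inf : B → B → B) (imp : B → B → B) (one : B)
    (hS : FH.IsImpSL inf imp one) (a : B) :
    (one ∈ {b : B | FH.sle inf (imp b a) b}) ∧
    (∀ b c : B, b ∈ {b : B | FH.sle inf (imp b a) b} → FH.sle inf b c →
      c ∈ {b : B | FH.sle inf (imp b a) b}) ∧
    (∀ b c : B, b ∈ {b : B | FH.sle inf (imp b a) b} →
      c ∈ {b : B | FH.sle inf (imp b a) b} →
      inf b c ∈ {b : B | FH.sle inf (imp b a) b}) ∧
    (Finite B → ∃ m ∈ {b : B | FH.sle inf (imp b a) b},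
      ∀ b ∈ {b : B | FH.sle inf (imp b a) b}, FH.sle inf m b) := by

  obtain ⟨hcm, has, hid, hone, hres⟩ := hS
  have lrefl : ∀ x, FH.sle inf x x := hid
  have ltrans : ∀ x y z, FH.sle inf x y → FH.sle inf y z → FH.sle inf x z := by
    intro x y z hxy hyz
    unfold FH.sle at *
    calc inf x z = inf (inf x y) z := by rw [hxy]
      _ = inf x (inf y z) := has x y z
      _ = inf x y := by rw [hyz]
      _ = x := hxy
  have ille : ∀ x y, FH.sle inf (inf x y) x := by
    intro x y
    unfold FH.sle
    calc inf (inf x y) x = inf x (inf y x) := has x y x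
      _ = inf x (inf x y) := by rw [hcm y x]
      _ = inf (inf x x) y := (has x x y).symm
      _ = inf x y := by rw [hid]
  have ilre : ∀ x y, FH.sle inf (inf x y) y := by
    intro x y
    unfold FH.sle
    calc inf (inf x y) y = inf x (inf y y) := has x y y
      _ = inf x y := by rw [hid]
  have linf : ∀ x y z, FH.sle inf x y → FH.sle inf x z → FH.sle inf x (inf y z) := by
    intro x y z hxy hxz
    unfold FH.sle at *
    calc inf x (inf y z) = inf (inf x y) z := (has x y z).symm
      _ = inf x z := by rw [hxy]
      _ = x := hxz
  -- residuation in sle form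
  have resid : ∀ x y z, FH.sle inf (inf x y) z ↔ FH.sle inf x (imp y z) := hres
  have mp_ : ∀ x y, FH.sle inf (inf (imp y x) y) x := by
    intro x y
    exact (resid (imp y x) y x).mpr (lrefl _)
  refine ⟨hone (imp one a), ?_, ?_, ?_⟩
  · -- upset
    intro b c hb hbc
    simp only [Set.mem_setOf_eq] at *
    -- imp c a ≤ imp b a ≤ b ≤ c
    have h1 : FH.sle inf (inf (imp c a) b) c :=
      ltrans _ _ _ (ilre _ _) hbc
    have h2 : FH.sle inf (inf (imp c a) b) (inf (imp c a) c) :=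
      linf _ _ _ (ille _ _) h1
    have h3 : FH.sle inf (inf (imp c a) b) a := ltrans _ _ _ h2 (mp_ a c)
    have h4 : FH.sle inf (imp c a) (imp b a) := (resid _ _ _).mp h3
    exact ltrans _ _ _ h4 (ltrans _ _ _ hb hbc)
  · -- meet closure
    intro b c hb hc
    simp only [Set.mem_setOf_eq] at *
    set d := imp (inf b c) a with hd
    have hda : FH.sle inf (inf d (inf b c)) a := mp_ a (inf b c)
    -- d ∧ b ≤ a
    have hdb_c : FH.sle inf (inf (inf d b) c) a := by
      unfold FH.sle at hda ⊢
      rw [has d b c]; exact hda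
    have hdb_ca : FH.sle inf (inf d b) (imp c a) := (resid _ _ _).mp hdb_c
    have hdb_le_c : FH.sle inf (inf d b) c := ltrans _ _ _ hdb_ca hc
    have hdb_a : FH.sle inf (inf d b) a := by
      unfold FH.sle at hdb_le_c hdb_c ⊢
      calc inf (inf d b) a = inf (inf (inf d b) c) a := by rw [hdb_le_c]
        _ = inf (inf d b) c := hdb_c
        _ = inf d b := hdb_le_c
    have hdb : FH.sle inf d b := ltrans _ _ _ ((resid _ _ _).mp hdb_a) hb
    -- d ∧ c ≤ a (symmetric)
    have hdc_b : FH.sle inf (inf (inf d c) b) a := by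
      unfold FH.sle at hda ⊢
      rw [has d c b, hcm c b]; exact hda
    have hdc_ba : FH.sle inf (inf d c) (imp b a) := (resid _ _ _).mp hdc_b
    have hdc_le_b : FH.sle inf (inf d c) b := ltrans _ _ _ hdc_ba hb
    have hdc_a : FH.sle inf (inf d c) a := by
      unfold FH.sle at hdc_le_b hdc_b ⊢
      calc inf (inf d c) a = inf (inf (inf d c) b) a := by rw [hdc_le_b]
        _ = inf (inf d c) b := hdc_b
        _ = inf d c := hdc_le_b
    have hdc : FH.sle inf d c := ltrans _ _ _ ((resid _ _ _).mp hdc_a) hc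
    exact linf _ _ _ hdb hdc
  · -- finite: minimum exists
    intro hfin
    have := Fintype.ofFinite B
    set S := {b : B | FH.sle inf (imp b a) b} with hSdef
    have honeS : one ∈ S := hone (imp one a)
    have hup : ∀ b c : B, b ∈ S → FH.sle inf b c → c ∈ S := by
      intro b c hb hbc
      simp only [hSdef, Set.mem_setOf_eq] at *
      have h1 : FH.sle inf (inf (imp c a) b) c := ltrans _ _ _ (ilre _ _) hbc
      have h2 : FH.sle inf (inf (imp c a) b) (inf (imp c a) c) :=
        linf _ _ _ (ille _ _) h1
      have h3 : FH.sle inf (inf (imp c a) b) a := ltrans _ _ _ h2 (mp_ a c)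
      have h4 : FH.sle inf (imp c a) (imp b a) := (resid _ _ _).mp h3
      exact ltrans _ _ _ h4 (ltrans _ _ _ hb hbc)
    have hmeet : ∀ b c : B, b ∈ S → c ∈ S → inf b c ∈ S := by
      intro b c hb hc
      simp only [hSdef, Set.mem_setOf_eq] at *
      set d := imp (inf b c) a with hd
      have hda : FH.sle inf (inf d (inf b c)) a := mp_ a (inf b c)
      have hdb_c : FH.sle inf (inf (inf d b) c) a := by
        unfold FH.sle at hda ⊢; rw [has d b c]; exact hda
      have hdb_ca : FH.sle inf (inf d b) (imp c a) := (resid _ _ _).mp hdb_c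
      have hdb_le_c : FH.sle inf (inf d b) c := ltrans _ _ _ hdb_ca hc
      have hdb_a : FH.sle inf (inf d b) a := by
        unfold FH.sle at hdb_le_c hdb_c ⊢
        calc inf (inf d b) a = inf (inf (inf d b) c) a := by rw [hdb_le_c]
          _ = inf (inf d b) c := hdb_c
          _ = inf d b := hdb_le_c
      have hdb : FH.sle inf d b := ltrans _ _ _ ((resid _ _ _).mp hdb_a) hb
      have hdc_b : FH.sle inf (inf (inf d c) b) a := by
        unfold FH.sle at hda ⊢; rw [has d c b, hcm c b]; exact hda
      have hdc_ba : FH.sle inf (inf d c) (imp b a) := (resid _ _ _).mp hdc_b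
      have hdc_le_b : FH.sle inf (inf d c) b := ltrans _ _ _ hdc_ba hb
      have hdc_a : FH.sle inf (inf d c) a := by
        unfold FH.sle at hdc_le_b hdc_b ⊢
        calc inf (inf d c) a = inf (inf (inf d c) b) a := by rw [hdc_le_b]
          _ = inf (inf d c) b := hdc_b
          _ = inf d c := hdc_le_b
      have hdc : FH.sle inf d c := ltrans _ _ _ ((resid _ _ _).mp hdc_a) hc
      exact linf _ _ _ hdb hdc
    have key : ∀ l : List B, ∃ m ∈ S, ∀ x ∈ l, x ∈ S → FH.sle inf m x := by
      intro l
      induction l with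
      | nil => exact ⟨one, honeS, by simp⟩
      | cons x xs ih =>
        obtain ⟨m, hmS, hm⟩ := ih
        by_cases hx : x ∈ S
        · refine ⟨inf m x, hmeet _ _ hmS hx, ?_⟩
          intro y hy hyS
          rcases List.mem_cons.mp hy with h | h
          · subst h; exact ilre m y
          · exact ltrans _ _ _ (ille m x) (hm y h hyS)
        · exact ⟨m, hmS, fun y hy hyS => by
            rcases List.mem_cons.mp hy with h | h
            · exact absurd (h ▸ hyS) hx
            · exact hm y h hyS⟩
    obtain ⟨m, hmS, hm⟩ := key (Finset.univ.toList)
    exact ⟨m, hmS, fun b hb => hm b (by simp [Finset.mem_toList]) hb⟩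
end

section
/- Let (P, ≤) be a poset and U₁, …, Uₙ upsets of P. Then ⋂ᵢ (Uᵢ ∪ ((Uᵢ)^c)_M) = (⋂ᵢ Uᵢ) ∪ (⋃ᵢ (Uᵢ)^c)_M, where A_M denotes the set of maximal elements of A. -/
/-- For upsets `U₁, …, Uₙ` of a poset,
`⋂ᵢ (Uᵢ ∪ ((Uᵢ)ᶜ)_M) = (⋂ᵢ Uᵢ) ∪ (⋃ᵢ (Uᵢ)ᶜ)_M`. -/
theorem stmt_16 {P : Type*} [PartialOrder P] (n : ℕ) (U : Fin n → Set P)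
    (hU : ∀ i, IsUpperSet (U i)) :
    (⋂ i, (U i ∪ maxSet (U i)ᶜ)) = (⋂ i, U i) ∪ maxSet (⋃ i, (U i)ᶜ) := by
  ext x
  simp only [Set.mem_iInter, Set.mem_union, maxSet, Set.mem_setOf_eq, Set.mem_iUnion,
    Set.mem_compl_iff]
  constructor
  · intro h
    by_cases hall : ∀ i, x ∈ U i
    · exact Or.inl hall
    · push_neg at hall
      obtain ⟨j, hj⟩ := hall
      refine Or.inr ⟨⟨j, hj⟩, ?_⟩
      rintro y ⟨i, hyi⟩ hxy
      have hxi : x ∉ U i := fun hx => hyi (hU i hxy hx)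
      rcases h i with hx | ⟨_, hmax⟩
      · exact absurd hx hxi
      · exact hmax y hyi hxy
  · rintro (hall | ⟨⟨j, hj⟩, hmax⟩) i
    · exact Or.inl (hall i)
    · by_cases hx : x ∈ U i
      · exact Or.inl hx
      · exact Or.inr ⟨hx, fun y hy hxy => hmax y ⟨i, hy⟩ hxy⟩
end

section
/- Let H be a Hilbert algebra and a₁, …, aₙ ∈ H. Then ⋃ᵢ φ(aᵢ)^c = ((⋃ᵢ φ(aᵢ)^c)_M], i.e., every irreducible implicative filter P that omits some aᵢ is contained in an irreducible implicative filter Q that is maximal among those omitting some aⱼ. Consequently, for every U in the subalgebra generated by φ[H], (U^c)_M] = U^c, i.e., S^π(U) ⇒ U = U where S^π(U) = U ∪ (U^c)_M. -/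
/-!
Extend `P` by Zorn's lemma to an implicative filter `Q` maximal among the filters that omit
some `aᵢ`: the union of a chain of such filters is a filter, and since there are only finitely
many `aᵢ` it still omits one of them. Such a `Q` is irreducible, for if `Q = F₁ ∩ F₂` with both
`Fₖ` strictly larger, maximality puts every `aᵢ` into `F₁` and into `F₂`, hence into `Q`.
For `U = φ(b₁) ∩ ⋯ ∩ φ(bₘ)` this says that `Uᶜ` is the downset of its maximal elements, and a
point of `S^π(U) ⇒ U` outside `U` would lie below a maximal point of `Uᶜ`, which is in `S^π(U)`
but not in `U`.
-/

namespace FH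

open Set

variable {H : Type*} {imp : H → H → H} {one : H}

variable (imp one) in
def phiSet (s : Set H) : Set (Set H) :=
  {P | IsIrr imp one P ∧ s ⊆ P}

theorem isUp_phiSet (s : Set H) : IsUp imp one (phiSet imp one s) :=
  ⟨fun _ hP => hP.1, fun _ _ hP hQ hPQ => ⟨hQ, hP.2.trans hPQ⟩⟩

theorem mem_Xc_phiSet {s : Set H} {P : Set H} :
    P ∈ Xc imp one (phiSet imp one s) ↔ IsIrr imp one P ∧ ¬ s ⊆ P :=
  and_congr_right fun hP => not_congr ⟨And.right, And.intro hP⟩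

theorem iUnion_Xc_phi {ι : Type*} (a : ι → H) :
    ⋃ i, Xc imp one (phi imp one (a i)) = Xc imp one (phiSet imp one (range a)) := by
  ext P
  simp only [mem_iUnion, mem_Xc_phiSet, range_subset_iff, not_forall]
  exact ⟨fun ⟨i, hP, hi⟩ => ⟨hP, i, fun h => hi ⟨hP, h⟩⟩,
    fun ⟨hP, i, hi⟩ => ⟨i, hP, fun h => hi h.2⟩⟩

theorem IsImpFilter.sUnion_of_isChain_s17 {c : Set (Set H)} (hc : IsChain (· ⊆ ·) c)
    (hne : c.Nonempty) (h : ∀ F ∈ c, IsImpFilter imp one F) : IsImpFilter imp one (⋃₀ c) := by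
  obtain ⟨F₀, hF₀⟩ := hne
  refine ⟨⟨F₀, hF₀, (h F₀ hF₀).1⟩, ?_⟩
  rintro x y ⟨F₁, hF₁, hx⟩ ⟨F₂, hF₂, hxy⟩
  rcases hc.total hF₁ hF₂ with h₁₂ | h₂₁
  · exact ⟨F₂, hF₂, (h F₂ hF₂).2 x y (h₁₂ hx) hxy⟩
  · exact ⟨F₁, hF₁, (h F₁ hF₁).2 x y hx (h₂₁ hxy)⟩

theorem exists_maximal_impFilter_not_supset {s : Set H} (hs : s.Finite) {P : Set H}
    (hP : IsImpFilter imp one P) (hPs : ¬ s ⊆ P) :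
    ∃ Q, P ⊆ Q ∧ Maximal (fun F => IsImpFilter imp one F ∧ ¬ s ⊆ F) Q := by
  refine zorn_subset_nonempty {F | IsImpFilter imp one F ∧ ¬ s ⊆ F} ?_ P ⟨hP, hPs⟩
  intro c hcS hc hne
  refine ⟨⋃₀ c, ⟨IsImpFilter.sUnion_of_isChain_s17 hc hne fun F hF => (hcS hF).1, fun hsc => ?_⟩,
    fun F hF => subset_sUnion_of_mem hF⟩
  obtain ⟨F, hF, hsF⟩ := hc.directedOn.exists_mem_subset_of_finite_of_subset_sUnion hne hs hsc
  exact (hcS hF).2 hsF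

theorem isIrr_of_maximal_not_supset {s Q : Set H}
    (hQ : Maximal (fun F => IsImpFilter imp one F ∧ ¬ s ⊆ F) Q) : IsIrr imp one Q := by
  obtain ⟨hQF, hQs⟩ := hQ.prop
  have hsup : ∀ F, IsImpFilter imp one F → Q ⊆ F → Q ≠ F → s ⊆ F := fun F hF hQF hne =>
    by_contra fun hsF => hne (hQ.eq_of_subset ⟨hF, hsF⟩ hQF)
  refine ⟨hQF, fun htop => hQs (htop ▸ subset_univ s), fun F₁ F₂ h₁ h₂ hQ₁₂ => ?_⟩
  by_contra! hne
  exact hQs <| hQ₁₂ ▸ subset_inter (hsup F₁ h₁ (hQ₁₂ ▸ inter_subset_left) hne.1)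
    (hsup F₂ h₂ (hQ₁₂ ▸ inter_subset_right) hne.2)

theorem mem_Mx_of_maximal {S : Set (Set H)} {P : Set H} (h : Maximal (· ∈ S) P) : P ∈ Mx S :=
  ⟨h.prop, fun _ hQ hPQ => h.eq_of_subset hQ hPQ⟩

theorem Xc_phiSet_subset_dn_Mx {s : Set H} (hs : s.Finite) :
    Xc imp one (phiSet imp one s) ⊆ dn imp one (Mx (Xc imp one (phiSet imp one s))) := by
  intro P hP
  obtain ⟨hPirr, hPs⟩ := mem_Xc_phiSet.1 hP
  obtain ⟨Q, hPQ, hQ⟩ := exists_maximal_impFilter_not_supset hs hPirr.1 hPs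
  have hQX : Q ∈ Xc imp one (phiSet imp one s) :=
    mem_Xc_phiSet.2 ⟨isIrr_of_maximal_not_supset hQ, hQ.prop.2⟩
  refine ⟨hPirr, Q, mem_Mx_of_maximal (hQ.mono (fun F hF => ?_) hQX), hPQ⟩
  exact ⟨(mem_Xc_phiSet.1 hF).1.1, (mem_Xc_phiSet.1 hF).2⟩

theorem dn_Mx_Xc_subset {U : Set (Set H)} (hU : IsUp imp one U) :
    dn imp one (Mx (Xc imp one U)) ⊆ Xc imp one U := by
  rintro P ⟨hP, Q, ⟨⟨hQ, hQU⟩, -⟩, hPQ⟩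
  exact ⟨hP, fun hPU => hQU (hU.2 P Q hPU hQ hPQ)⟩

theorem Xc_phiSet_eq_dn_Mx {s : Set H} (hs : s.Finite) :
    Xc imp one (phiSet imp one s) = dn imp one (Mx (Xc imp one (phiSet imp one s))) :=
  (Xc_phiSet_subset_dn_Mx hs).antisymm (dn_Mx_Xc_subset (isUp_phiSet s))

theorem himp_union_Mx_Xc_eq_self {U : Set (Set H)} (hU : IsUp imp one U)
    (h : Xc imp one U ⊆ dn imp one (Mx (Xc imp one U))) :
    himp imp one (U ∪ Mx (Xc imp one U)) U = U := by
  ext P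
  constructor
  · rintro ⟨hP, hPU⟩
    by_contra hnot
    obtain ⟨-, Q, hQ, hPQ⟩ := h ⟨hP, hnot⟩
    exact hQ.1.2 (hPU Q hQ.1.1 hPQ (Or.inr hQ))
  · exact fun hP => ⟨hU.1 P hP, fun Q hQ hPQ _ => hU.2 P Q hP hQ hPQ⟩

end FH

theorem stmt_17_general {H : Type*} (imp : H → H → H) (one : H)
    (n : ℕ) (a : Fin n → H) :
    (⋃ i, FH.Xc imp one (FH.phi imp one (a i))) =
      FH.dn imp one (FH.Mx (⋃ i, FH.Xc imp one (FH.phi imp one (a i)))) ∧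
    (∀ U, FH.gen imp one U →
      FH.himp imp one (U ∪ FH.Mx (FH.Xc imp one U)) U = U) := by
  refine ⟨FH.iUnion_Xc_phi a ▸ FH.Xc_phiSet_eq_dn_Mx (Set.finite_range a), ?_⟩
  rintro U ⟨l, -, rfl⟩
  change FH.himp imp one (FH.phiSet imp one {b | b ∈ l} ∪ _) _ = _
  exact FH.himp_union_Mx_Xc_eq_self (FH.isUp_phiSet _) (FH.Xc_phiSet_subset_dn_Mx l.finite_toSet)

/-- For a Hilbert algebra `H` and `a₁, …, aₙ ∈ H`,
`⋃ᵢ φ(aᵢ)ᶜ = ((⋃ᵢ φ(aᵢ)ᶜ)_M]` (complements relative to `X(H)`, downsets within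
`X(H)`).  Consequently, for every `U ∈ ⟨φ[H]⟩`, with `S^π(U) = U ∪ (Uᶜ)_M` one
has `S^π(U) ⇒ U = U`. -/
theorem stmt_17 {H : Type*} (imp : H → H → H) (one : H)
    (hH : FH.IsHilbert imp one) (n : ℕ) (a : Fin n → H) :
    (⋃ i, FH.Xc imp one (FH.phi imp one (a i))) =
      FH.dn imp one (FH.Mx (⋃ i, FH.Xc imp one (FH.phi imp one (a i)))) ∧
    (∀ U, FH.gen imp one U →
      FH.himp imp one (U ∪ FH.Mx (FH.Xc imp one U)) U = U) :=
  stmt_17_general imp one n a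
end

section
/- Let H be a bounded implicative semilattice and a ∈ H. Then G_a = {b ∈ H : ¬¬a ∧ (b → a) ≤ b} is a filter of H: 1 ∈ G_a, G_a is an upset, and it is closed under meets. Consequently, every finite bounded implicative semilattice has a Gabbay function G(a) = min G_a. -/
/-!
For fixed `n` the condition `n ∧ (b → a) ≤ b` only gets weaker as `b` grows, since `b → a` is
antitone in `b`. For meets, put `x = n ∧ (b ∧ c → a)`: residuation gives `x ∧ c ≤ b → a`, hence
`x ∧ c ≤ b` because `b ∈ G_a`, hence `x ∧ c ≤ a`, i.e. `x ≤ c → a`, so `x ≤ c` because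
`c ∈ G_a`, and then also `x ≤ b`.
-/

theorem InfClosed.exists_isLeast_of_finite {α : Type*} [SemilatticeInf α] {s : Set α}
    (hs : InfClosed s) (hfin : s.Finite) (hne : s.Nonempty) : ∃ m, IsLeast s m := by
  obtain ⟨m, hm⟩ := hfin.exists_minimal hne
  exact ⟨m, hs.codirectedOn.minimal_iff_isLeast.mp hm⟩

section Gabbay

variable {α : Type*} [SemilatticeInf α] {imp : α → α → α}

/-- `G_a`, with `n` in the role of `¬¬a`. -/
def gabbaySet (imp : α → α → α) (n a : α) : Set α := {b | n ⊓ imp b a ≤ b}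

variable (himp : ∀ x y z : α, x ⊓ y ≤ z ↔ x ≤ imp y z)
include himp

theorem imp_le_imp_right {b c : α} (hbc : b ≤ c) (x : α) : imp c x ≤ imp b x := by
  rw [← himp]
  calc imp c x ⊓ b ≤ imp c x ⊓ c := inf_le_inf_left _ hbc
    _ ≤ x := (himp _ _ _).mpr le_rfl

theorem isUpperSet_gabbaySet (n a : α) : IsUpperSet (gabbaySet imp n a) := fun b c hbc hb =>
  calc n ⊓ imp c a ≤ n ⊓ imp b a := inf_le_inf_left _ (imp_le_imp_right himp hbc a)
    _ ≤ b := hb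
    _ ≤ c := hbc

theorem infClosed_gabbaySet (n a : α) : InfClosed (gabbaySet imp n a) := by
  intro b hb c hc
  set x := n ⊓ imp (b ⊓ c) a
  have hxbc : x ⊓ c ⊓ b ≤ a := by
    rw [inf_right_comm, inf_assoc]
    exact (himp _ _ _).mpr inf_le_right
  have hxc_le_b : x ⊓ c ≤ b :=
    calc x ⊓ c ≤ n ⊓ imp b a := le_inf (inf_le_left.trans inf_le_left) ((himp _ _ _).mp hxbc)
      _ ≤ b := hb
  have hx_le_c : x ≤ c :=
    calc x ≤ n ⊓ imp c a :=
          le_inf inf_le_left ((himp _ _ _).mp ((le_inf le_rfl hxc_le_b).trans hxbc))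
      _ ≤ c := hc
  exact le_inf ((le_inf le_rfl hx_le_c).trans hxc_le_b) hx_le_c

end Gabbay

namespace FH

variable {B : Type*} {inf imp : B → B → B} {one : B}

abbrev IsImpSL.semilatticeInf (h : IsImpSL inf imp one) : SemilatticeInf B where
  inf := inf
  le := sle inf
  le_refl := h.2.2.1
  le_trans a b c hab hbc := by unfold sle at *; rw [← hab, h.2.1, hbc]
  le_antisymm a b hab hba := by unfold sle at *; rw [← hab, h.1, hba]
  inf_le_left a b := by unfold sle; rw [h.2.1, h.1 b a, ← h.2.1, h.2.2.1]
  inf_le_right a b := by unfold sle; rw [h.2.1, h.2.2.1]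
  le_inf a b c hab hac := by unfold sle at *; rw [← h.2.1, hab, hac]

end FH

theorem stmt_18_general {B : Type*} (inf : B → B → B) (imp : B → B → B) (zero one : B)
    (hS : FH.IsImpSL inf imp one) (a : B) :
    (one ∈ {b : B | FH.sle inf (inf (imp (imp a zero) zero) (imp b a)) b}) ∧
    (∀ b c : B, b ∈ {b : B | FH.sle inf (inf (imp (imp a zero) zero) (imp b a)) b} →
      FH.sle inf b c →
      c ∈ {b : B | FH.sle inf (inf (imp (imp a zero) zero) (imp b a)) b}) ∧
    (∀ b c : B, b ∈ {b : B | FH.sle inf (inf (imp (imp a zero) zero) (imp b a)) b} →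
      c ∈ {b : B | FH.sle inf (inf (imp (imp a zero) zero) (imp b a)) b} →
      inf b c ∈ {b : B | FH.sle inf (inf (imp (imp a zero) zero) (imp b a)) b}) ∧
    (Finite B → ∃ m ∈ {b : B | FH.sle inf (inf (imp (imp a zero) zero) (imp b a)) b},
      ∀ b ∈ {b : B | FH.sle inf (inf (imp (imp a zero) zero) (imp b a)) b},
        FH.sle inf m b) := by
  let := hS.semilatticeInf
  have hone : ∀ x : B, x ≤ one := hS.2.2.2.1
  have hG : InfClosed (gabbaySet imp (imp (imp a zero) zero) a) :=
    infClosed_gabbaySet hS.2.2.2.2 _ _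
  refine ⟨hone _, fun b c hb hbc => isUpperSet_gabbaySet hS.2.2.2.2 _ _ hbc hb,
    fun b c hb hc => hG hb hc, fun _ => ?_⟩
  obtain ⟨m, hm⟩ := hG.exists_isLeast_of_finite (Set.toFinite _) ⟨one, hone _⟩
  exact ⟨m, hm.1, hm.2⟩

/-- In a bounded implicative semilattice, for every `a` the set
`G_a = {b : ¬¬a ∧ (b → a) ≤ b}` is a filter (contains `1`, is an upset, closed
under meets); consequently every finite bounded implicative semilattice has a
Gabbay function `G(a) = min G_a`. -/
theorem stmt_18 {B : Type*} (inf : B → B → B) (imp : B → B → B) (zero one : B)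
    (hS : FH.IsImpSL inf imp one) (hbot : ∀ a : B, FH.sle inf zero a) (a : B) :
    (one ∈ {b : B | FH.sle inf (inf (imp (imp a zero) zero) (imp b a)) b}) ∧
    (∀ b c : B, b ∈ {b : B | FH.sle inf (inf (imp (imp a zero) zero) (imp b a)) b} →
      FH.sle inf b c →
      c ∈ {b : B | FH.sle inf (inf (imp (imp a zero) zero) (imp b a)) b}) ∧
    (∀ b c : B, b ∈ {b : B | FH.sle inf (inf (imp (imp a zero) zero) (imp b a)) b} →
      c ∈ {b : B | FH.sle inf (inf (imp (imp a zero) zero) (imp b a)) b} →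
      inf b c ∈ {b : B | FH.sle inf (inf (imp (imp a zero) zero) (imp b a)) b}) ∧
    (Finite B → ∃ m ∈ {b : B | FH.sle inf (inf (imp (imp a zero) zero) (imp b a)) b},
      ∀ b ∈ {b : B | FH.sle inf (inf (imp (imp a zero) zero) (imp b a)) b},
        FH.sle inf m b) :=
  stmt_18_general inf imp zero one hS a
end
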